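/- arXiv:1209.2512 — 10 statements merged into one kernel-verified Lean document; each statement's English description precedes it below -/
import Mathlib

section
/- Let G be a dart-free graph, U a proper subset of vertices with nonempty anti-neighborhood A(U), and u a contact vertex (u is in N(U) and has a neighbor in A(U)). If vertices a, b, c induce a path P3 inside U, then u is not adjacent to all three of a, b, c. -/
open SimpleGraph

/-- The dart: vertices a,b,c,d,e = 0,1,2,3,4; edges ab, ac, ad, bd, cd, de. -/
def dartGraph : SimpleGraph (Fin 5) :=
  SimpleGraph.fromEdgeSet {s(0,1), s(0,2), s(0,3), s(1,3), s(2,3), s(3,4)}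

/-- The bull: vertices a,b,c,d,e = 0,1,2,3,4; edges ab, bc, cd, be, ce. -/
def bullGraph : SimpleGraph (Fin 5) :=
  SimpleGraph.fromEdgeSet {s(0,1), s(1,2), s(2,3), s(1,4), s(2,4)}

/-- The house: C4 on v1..v4 = 0..3 plus v5 = 4 adjacent to v2 = 1 and v3 = 2. -/
def houseGraph : SimpleGraph (Fin 5) :=
  SimpleGraph.fromEdgeSet {s(0,1), s(1,2), s(2,3), s(3,0), s(4,1), s(4,2)}

/-- Anti-neighborhood of a vertex: all vertices distinct from and nonadjacent to `v`. -/
def vertexAnti {V : Type*} (G : SimpleGraph V) (v : V) : Set V :=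
  {u | u ≠ v ∧ ¬ G.Adj v u}

/-- Anti-neighborhood of a set `S`: vertices outside `S` with no neighbor in `S`. -/
def antiNbhd {V : Type*} (G : SimpleGraph V) (S : Set V) : Set V :=
  {v | v ∉ S ∧ ∀ u ∈ S, ¬ G.Adj v u}

/-- Contact vertices of `S`: outside `S`, with a neighbor in `S` and a neighbor in `antiNbhd G S`. -/
def contactSet {V : Type*} (G : SimpleGraph V) (S : Set V) : Set V :=
  {v | v ∉ S ∧ (∃ u ∈ S, G.Adj v u) ∧ ∃ w ∈ antiNbhd G S, G.Adj v w}

/-- `G` has a clique cutset: a clique whose removal disconnects the graph. -/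
def HasCliqueCutset {V : Type*} (G : SimpleGraph V) : Prop :=
  ∃ C : Set V, G.IsClique C ∧ ¬ (G.induce Cᶜ).Preconnected

/-- `U` is a module: no outside vertex distinguishes two vertices of `U`. -/
def IsModule {V : Type*} (G : SimpleGraph V) (U : Set V) : Prop :=
  ∀ z ∉ U, (∀ x ∈ U, G.Adj z x) ∨ (∀ x ∈ U, ¬ G.Adj z x)

/-- `G` is prime: all its modules are trivial. -/
def IsPrime {V : Type*} (G : SimpleGraph V) : Prop :=
  ∀ U : Set V, IsModule G U → U = ∅ ∨ (∃ x, U = {x}) ∨ U = Set.univ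

/-- `G` is perfect: every induced subgraph has chromatic number equal to clique number. -/
def IsPerfect {V : Type*} (G : SimpleGraph V) : Prop :=
  ∀ s : Set V, (G.induce s).chromaticNumber = ((G.induce s).cliqueNum : ℕ∞)

/-- Distance from a vertex to a set of vertices. -/
noncomputable def setDist {V : Type*} (G : SimpleGraph V) (v : V) (S : Set V) : ℕ :=
  sInf {n | ∃ u ∈ S, n = G.dist v u}

theorem stmt0 {V : Type*} [Fintype V] (G : SimpleGraph V)
    (hdart : IsEmpty (dartGraph ↪g G))
    (U : Set V) (hU : U ⊂ Set.univ) (hA : (antiNbhd G U).Nonempty)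
    (u : V) (hu : u ∈ contactSet G U)
    (a b c : V) (ha : a ∈ U) (hb : b ∈ U) (hc : c ∈ U) (hac' : a ≠ c)
    (hab : G.Adj a b) (hbc : G.Adj b c) (hac : ¬ G.Adj a c) :
    ¬ (G.Adj u a ∧ G.Adj u b ∧ G.Adj u c) := by
  rintro ⟨hua, hub, huc⟩
  obtain ⟨huU, -, w, hwA, huw⟩ := hu
  obtain ⟨hwU, hwadj⟩ := hwA
  have hba := hab.symm
  have hcb := hbc.symm
  -- f : 0↦b, 1↦a, 2↦c, 3↦u, 4↦w
  set f : Fin 5 → V := ![b, a, c, u, w] with hf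
  have hne : ∀ x, x ∈ U → u ≠ x := by
    rintro x hx rfl; exact huU hx
  have hwne : ∀ x, x ∈ U → w ≠ x := by
    rintro x hx rfl; exact hwU hx
  have huw' : u ≠ w := by
    rintro rfl; exact hwadj a ha hua
  have hinj : Function.Injective f := by
    intro x y hxy
    fin_cases x <;> fin_cases y <;> (try rfl) <;> simp only [hf, Matrix.cons_val_zero, Matrix.cons_val_one, Matrix.head_cons, Matrix.cons_val_two, Matrix.tail_cons, Matrix.cons_val_three, Matrix.cons_val_four, Matrix.cons_val_succ, Fin.isValue] at hxy <;>
      first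
      | rfl
      | exact absurd hxy hab.ne'
      | exact absurd hxy hab.ne
      | exact absurd hxy hbc.ne
      | exact absurd hxy hbc.ne'
      | exact absurd hxy hac'
      | exact absurd hxy hac'.symm
      | exact absurd hxy.symm (hne _ ‹_›)
      | exact absurd hxy (hne _ ‹_›)
      | exact absurd hxy.symm (hwne _ ‹_›)
      | exact absurd hxy (hwne _ ‹_›)
      | exact absurd hxy huw'
      | exact absurd hxy.symm huw'
  have hwa : ¬ G.Adj w a := hwadj a ha
  have hwb : ¬ G.Adj w b := hwadj b hb
  have hwc : ¬ G.Adj w c := hwadj c hc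
  refine hdart.false ⟨⟨f, hinj⟩, ?_⟩
  intro x y
  fin_cases x <;> fin_cases y <;>
    simp [hf, dartGraph, SimpleGraph.fromEdgeSet_adj, Sym2.eq_iff] <;>
    first
    | exact hab
    | exact hab.symm
    | exact hbc
    | exact hbc.symm
    | exact hua
    | exact hua.symm
    | exact hub
    | exact hub.symm
    | exact huc
    | exact huc.symm
    | exact huw
    | exact huw.symm
    | exact hac
    | exact fun h => hac h.symm
    | exact hwa
    | exact fun h => hwa h.symm
    | exact hwb
    | exact fun h => hwb h.symm
    | exact hwc
    | exact fun h => hwc h.symm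
    | exact G.loopless _
end

section
/- Let G be a dart-free graph containing an induced complement of a cycle C_k with k ≥ 7, say H with vertices v_1,...,v_k where the non-edges are exactly v_i v_{i+1} (indices mod k). Suppose H⁺ is nonempty and x ∈ H⁺. If x is adjacent to v_i for some i, then x is adjacent to v_{i-2} and v_{i+2}. -/
open SimpleGraph

/-!
Six consecutive vertices of an anti-hole with at least seven vertices induce the complement of
the path `P₆`, and translations and the reflection of `Fin k` are automorphisms of `C_k`, so both
claims follow from one fact about an induced complement of `P₆` with vertices `0, …, 5`: a vertex
`x` adjacent to `2` and to some `w` anticomplete to the `P₆` is adjacent to `4`. Otherwise,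
according to the adjacency of `x` to `0, 3, 5, 1`, one always finds an induced dart.
-/

namespace SimpleGraph

variable {V W : Type*} {G : SimpleGraph V} {H : SimpleGraph W}

def Embedding.compl (φ : G ↪g H) : Gᶜ ↪g Hᶜ where
  toEmbedding := φ.toEmbedding
  map_rel_iff' := by simp [compl_adj, φ.injective.ne_iff]

@[simp] lemma Embedding.compl_apply (φ : G ↪g H) (v : V) : φ.compl v = φ v := rfl

lemma compl_pathGraph_adj {n : ℕ} {u v : Fin n} :
    (pathGraph n)ᶜ.Adj u v ↔ u.val + 1 < v.val ∨ v.val + 1 < u.val := by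
  simp only [compl_adj, pathGraph_adj, ne_eq, Fin.ext_iff]
  omega

def pathGraphEmbeddingCycleGraph {n k : ℕ} (h : n < k) : pathGraph n ↪g cycleGraph k where
  toEmbedding := Fin.castLEEmb h.le
  map_rel_iff' := by
    intro u v
    simp only [Fin.castLEEmb_apply, cycleGraph_adj', pathGraph_adj]
    have hu : u.val < n := u.2
    have hv : v.val < n := v.2
    rcases lt_trichotomy (Fin.castLE h.le u) (Fin.castLE h.le v) with huv | huv | huv
    · rw [Fin.coe_sub_iff_lt.2 huv, Fin.coe_sub_iff_le.2 huv.le]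
      rw [Fin.lt_def] at huv
      simp only [Fin.val_castLE] at *
      omega
    · rw [huv, Fin.coe_sub_iff_le.2 le_rfl, Fin.castLE_inj.1 huv]
      simp
    · rw [Fin.coe_sub_iff_le.2 huv.le, Fin.coe_sub_iff_lt.2 huv]
      rw [Fin.lt_def] at huv
      simp only [Fin.val_castLE] at *
      omega

@[simp] lemma pathGraphEmbeddingCycleGraph_apply {n k : ℕ} (h : n < k) (v : Fin n) :
    pathGraphEmbeddingCycleGraph h v = Fin.castLE h.le v := rfl

variable {k : ℕ} [NeZero k]

def cycleGraphAddLeft (j : Fin k) : cycleGraph k ≃g cycleGraph k where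
  toEquiv := Equiv.addLeft j
  map_rel_iff' := by simp [cycleGraph_adj']

@[simp] lemma cycleGraphAddLeft_apply (j v : Fin k) : cycleGraphAddLeft j v = j + v := rfl

variable (k) in
def cycleGraphNeg : cycleGraph k ≃g cycleGraph k where
  toEquiv := Equiv.neg (Fin k)
  map_rel_iff' := by
    intro u v
    simp only [Equiv.neg_apply, cycleGraph_adj', neg_sub_neg]
    tauto

@[simp] lemma cycleGraphNeg_apply (v : Fin k) : cycleGraphNeg k v = -v := rfl

end SimpleGraph

section DartFree

variable {V : Type*} {G : SimpleGraph V}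

lemma false_of_dart (hdart : IsEmpty (dartGraph ↪g G)) (a b c d e : V)
    (hab : G.Adj a b) (hac : G.Adj a c) (had : G.Adj a d) (hbd : G.Adj b d)
    (hcd : G.Adj c d) (hde : G.Adj d e)
    (hbc : ¬ G.Adj b c) (hae : ¬ G.Adj a e) (hbe : ¬ G.Adj b e) (hce : ¬ G.Adj c e)
    (nbc : b ≠ c) (nae : a ≠ e) (nbe : b ≠ e) (nce : c ≠ e) : False := by
  have hinj : Function.Injective ![a, b, c, d, e] := by
    intro p q h
    fin_cases p <;> fin_cases q <;> simp_all
  refine hdart.false ⟨⟨![a, b, c, d, e], hinj⟩, fun {p q} => ?_⟩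
  fin_cases p <;> fin_cases q <;> simp [dartGraph] <;> simp_all [G.adj_comm]

lemma antiNbhd_anti {S T : Set V} (h : S ⊆ T) : antiNbhd G T ⊆ antiNbhd G S :=
  fun _ ⟨hvT, hv⟩ => ⟨fun hvS => hvT (h hvS), fun u hu => hv u (h hu)⟩

lemma adj_four_of_adj_two (hdart : IsEmpty (dartGraph ↪g G)) (p : (pathGraph 6)ᶜ ↪g G)
    {x w : V} (hxw : G.Adj x w) (hw : w ∈ antiNbhd G (Set.range p)) (h2 : G.Adj x (p 2)) :
    G.Adj x (p 4) := by
  have adj : ∀ a b : Fin 6, a.val + 1 < b.val ∨ b.val + 1 < a.val → G.Adj (p a) (p b) :=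
    fun _ _ h => p.map_adj_iff.2 (compl_pathGraph_adj.2 h)
  have nadj : ∀ a b : Fin 6, b.val = a.val + 1 → ¬ G.Adj (p a) (p b) :=
    fun _ _ h h' => by have := compl_pathGraph_adj.1 (p.map_adj_iff.1 h'); omega
  have ne : ∀ a b, a ≠ b → p a ≠ p b := fun _ _ => p.injective.ne
  have hwp : ∀ a, ¬ G.Adj (p a) w := fun a h => hw.2 _ ⟨a, rfl⟩ h.symm
  have hwne : ∀ a, p a ≠ w := fun a h => hw.1 ⟨a, h⟩
  have hxne : ∀ a, p a ≠ x := fun a h => hwp a (h ▸ hxw)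
  by_contra h4
  by_cases h0 : G.Adj x (p 0)
  · by_cases h3 : G.Adj x (p 3)
    · exact false_of_dart hdart (p 0) (p 2) (p 3) x w (adj 0 2 (by decide)) (adj 0 3 (by decide))
        h0.symm h2.symm h3.symm hxw (nadj 2 3 rfl) (hwp 0) (hwp 2) (hwp 3) (ne 2 3 (by decide))
        (hwne 0) (hwne 2) (hwne 3)
    · exact false_of_dart hdart (p 2) (p 4) x (p 0) (p 3) (adj 2 4 (by decide)) h2.symm
        (adj 2 0 (by decide)) (adj 4 0 (by decide)) h0 (adj 0 3 (by decide)) (fun h => h4 h.symm)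
        (nadj 2 3 rfl) (fun h => nadj 3 4 rfl h.symm) h3 (hxne 4) (ne 2 3 (by decide))
        (ne 4 3 (by decide)) (hxne 3).symm
  · by_cases h5 : G.Adj x (p 5)
    · by_cases h1 : G.Adj x (p 1)
      · exact false_of_dart hdart (p 5) (p 1) (p 2) x w (adj 5 1 (by decide))
          (adj 5 2 (by decide)) h5.symm h1.symm h2.symm hxw (nadj 1 2 rfl) (hwp 5) (hwp 1) (hwp 2)
          (ne 1 2 (by decide)) (hwne 5) (hwne 1) (hwne 2)
      · exact false_of_dart hdart (p 2) (p 0) x (p 5) (p 1) (adj 2 0 (by decide)) h2.symm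
          (adj 2 5 (by decide)) (adj 0 5 (by decide)) h5 (adj 5 1 (by decide))
          (fun h => h0 h.symm) (fun h => nadj 1 2 rfl h.symm) (nadj 0 1 rfl) h1 (hxne 0)
          (ne 2 1 (by decide)) (ne 0 1 (by decide)) (hxne 1).symm
    · exact false_of_dart hdart (p 0) (p 4) (p 5) (p 2) x (adj 0 4 (by decide))
        (adj 0 5 (by decide)) (adj 0 2 (by decide)) (adj 4 2 (by decide)) (adj 5 2 (by decide))
        h2.symm (nadj 4 5 rfl) (fun h => h0 h.symm) (fun h => h4 h.symm) (fun h => h5 h.symm)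
        (ne 4 5 (by decide)) (hxne 0) (hxne 4) (hxne 5)

end DartFree

theorem stmt1_general {V : Type*} (G : SimpleGraph V)
    (hdart : IsEmpty (dartGraph ↪g G))
    (k : ℕ) [NeZero k] (hk : 7 ≤ k) (f : (cycleGraph k)ᶜ ↪g G)
    (x : V) (hx : x ∈ contactSet G (Set.range f))
    (i : Fin k) (hxi : G.Adj x (f i)) :
    G.Adj x (f (i - 2)) ∧ G.Adj x (f (i + 2)) := by
  obtain ⟨-, -, w, hw, hxw⟩ := hx
  have h6 : 6 < k := by omega
  have two : Fin.castLE h6.le 2 = 2 := by ext; simp; exact (Nat.mod_eq_of_lt (by omega)).symm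
  have four : Fin.castLE h6.le 4 = 4 := by ext; simp; exact (Nat.mod_eq_of_lt (by omega)).symm
  have window (ψ : cycleGraph k ≃g cycleGraph k) (hψ : ψ 2 = i) : G.Adj x (f (ψ 4)) := by
    simpa [four] using adj_four_of_adj_two hdart
      (f.comp (ψ.toEmbedding.comp (pathGraphEmbeddingCycleGraph h6)).compl) hxw
      (antiNbhd_anti (Set.range_comp_subset_range _ f) hw) (by simpa [two, hψ] using hxi)
  constructor
  · convert window ((cycleGraphAddLeft (-(i + 2))).trans (cycleGraphNeg k)) (by simp) using 2
    simp only [RelIso.trans_apply, cycleGraphAddLeft_apply, cycleGraphNeg_apply]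
    open Fin.CommRing in ring
  · convert window (cycleGraphAddLeft (i - 2)) (by simp) using 2
    simp only [cycleGraphAddLeft_apply]
    open Fin.CommRing in ring

theorem stmt1 {V : Type*} [Fintype V] (G : SimpleGraph V)
    (hdart : IsEmpty (dartGraph ↪g G))
    (k : ℕ) [NeZero k] (hk : 7 ≤ k) (f : (cycleGraph k)ᶜ ↪g G)
    (hplus : (contactSet G (Set.range f)).Nonempty)
    (x : V) (hx : x ∈ contactSet G (Set.range f))
    (i : Fin k) (hxi : G.Adj x (f i)) :
    G.Adj x (f (i - 2)) ∧ G.Adj x (f (i + 2)) :=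
  stmt1_general G hdart k hk f x hx i hxi
end

section
/- Let G be a dart-free graph containing an induced complement of a cycle C_k with k ≥ 7, say H with vertices v_1,...,v_k (non-edges v_i v_{i+1}, indices mod k), such that H⁺ is nonempty, and let x ∈ H⁺. Then k is even, and the neighborhood of x in H is exactly {v_1, v_3, ..., v_{k-1}} or exactly {v_2, v_4, ..., v_k}. -/
open SimpleGraph

/-!
Write `v n` for the vertex of the anti-hole with index `n mod k`, and let `w` be a neighbour of `x`
with no neighbour on the anti-hole. If `x` saw two consecutive vertices `v n`, `v (n+1)`, then
with any common neighbour `v a` of both and the pendant `w` they would form a dart centred at `x`;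
so `x` misses everything far from `n`. A dart centred at `v n` then makes `v (n+2)` a neighbour
as well, and repeating this contradicts the first step: there are no consecutive neighbours.
Similarly a neighbour `v n` followed by two non-neighbours yields a dart centred at some `v d`,
which forces `v (n+2)` to be a neighbour too. The neighbours of `x` are thus closed under
`n ↦ n + 2` and contain no two consecutive indices, so they form one parity class, and going
once around the cycle shows that `k` is even.
-/

namespace Nat

theorem even_and_parity_of_periodic {k : ℕ} {p : ℕ → Prop} (hk : 0 < k)
    (hper : Function.Periodic p k) (hstep : ∀ n, p n → p (n + 2))
    (hsucc : ∀ n, p n → ¬ p (n + 1)) {i : ℕ} (hi : p i) :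
    Even k ∧ ∀ n, p n ↔ (Even n ↔ Even i) := by
  have hiter : ∀ t, p (i + 2 * t) := by
    intro t
    induction t with
    | zero => exact hi
    | succ t ih => exact hstep _ ih
  have hkeven : Even k := by
    by_contra hodd
    obtain ⟨r, hr⟩ := Nat.not_even_iff_odd.mp hodd
    have h := hiter (r + 1)
    rw [show i + 2 * (r + 1) = i + 1 + k by omega, hper] at h
    exact hsucc i hi h
  have hsame : ∀ n, (Even n ↔ Even i) → p n := by
    intro n hn
    have hK : i ≤ i * k := Nat.le_mul_of_pos_right i hk
    have hKeven : i * k % 2 = 0 := Nat.even_iff.mp (hkeven.mul_left i)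
    have hni : n % 2 = i % 2 := by simp only [Nat.even_iff] at hn; omega
    have h := hiter ((n + i * k - i) / 2)
    rw [show i + 2 * ((n + i * k - i) / 2) = n + i * k by omega] at h
    exact (hper.nat_mul i n).mp h
  refine ⟨hkeven, fun n => ⟨fun hn => ?_, hsame n⟩⟩
  by_contra hpar
  exact hsucc n hn (hsame (n + 1) (by rw [Nat.even_add_one]; tauto))

end Nat

section AntiHole

open Fin.NatCast

variable {k : ℕ} [NeZero k]

theorem Fin.natCast_ne_natCast_of_lt {a b : ℕ} (hab : a < b) (hba : b < a + k) :
    (a : Fin k) ≠ b := by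
  intro h
  have hmod : (b - a) % k = 0 := Nat.sub_mod_eq_zero_of_mod_eq (congrArg Fin.val h).symm
  rw [Nat.mod_eq_of_lt (by omega)] at hmod
  omega

theorem compl_cycleGraph_adj_natCast {a b : ℕ} (hab : a + 2 ≤ b) (hba : b + 2 ≤ a + k) :
    (cycleGraph k)ᶜ.Adj (a : Fin k) (b : Fin k) := by
  obtain ⟨m, rfl⟩ : ∃ m, k = m + 2 := ⟨k - 2, by omega⟩
  rw [compl_adj, cycleGraph_adj, sub_eq_iff_eq_add, sub_eq_iff_eq_add, ← Nat.cast_one,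
    ← Nat.cast_add, ← Nat.cast_add]
  refine ⟨Fin.natCast_ne_natCast_of_lt (by omega) (by omega), ?_⟩
  rintro (h | h)
  · exact Fin.natCast_ne_natCast_of_lt (by omega) (by omega) h
  · exact Fin.natCast_ne_natCast_of_lt (by omega) (by omega) h.symm

theorem compl_cycleGraph_not_adj_natCast_succ (a : ℕ) :
    ¬ (cycleGraph k)ᶜ.Adj (a : Fin k) ((a + 1 : ℕ) : Fin k) := by
  rw [compl_adj, not_and, not_not]
  intro hne
  have hk : 2 ≤ k := by
    by_contra hk
    obtain rfl : k = 1 := by have := NeZero.ne k; omega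
    exact hne (Subsingleton.elim _ _)
  obtain ⟨m, rfl⟩ : ∃ m, k = m + 2 := ⟨k - 2, by omega⟩
  rw [cycleGraph_adj, Nat.cast_succ, add_sub_cancel_left]
  exact Or.inr rfl

end AntiHole

section Dart

variable {V : Type*} {G : SimpleGraph V}

def dartEmbedding {a b c d e : V} (hbc : b ≠ c) (hab : G.Adj a b) (hac : G.Adj a c)
    (had : G.Adj a d) (hbd : G.Adj b d) (hcd : G.Adj c d) (hde : G.Adj d e)
    (hnbc : ¬ G.Adj b c) (hnae : ¬ G.Adj a e) (hnbe : ¬ G.Adj b e) (hnce : ¬ G.Adj c e) :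
    dartGraph ↪g G where
  toFun := ![a, b, c, d, e]
  inj' := by
    have hae : a ≠ e := by rintro rfl; exact hnbe hab.symm
    have hbe : b ≠ e := by rintro rfl; exact hnae hab
    have hce : c ≠ e := by rintro rfl; exact hnae hac
    intro i j hij
    fin_cases i <;> fin_cases j <;>
      simp_all [hab.ne, hac.ne, had.ne, hbd.ne, hcd.ne, hde.ne, hab.ne', hac.ne', had.ne',
        hbd.ne', hcd.ne', hde.ne', hbc.symm, hae.symm, hbe.symm, hce.symm]
  map_rel_iff' := by
    intro i j
    change G.Adj (![a, b, c, d, e] i) (![a, b, c, d, e] j) ↔ dartGraph.Adj i j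
    fin_cases i <;> fin_cases j <;>
      simp [dartGraph, hab, hab.symm, hac, hac.symm, had, had.symm, hbd, hbd.symm, hcd, hcd.symm,
        hde, hde.symm, hnbc, hnae, hnbe, hnce, mt G.adj_symm hnbc, mt G.adj_symm hnae,
        mt G.adj_symm hnbe, mt G.adj_symm hnce]

end Dart

section DartFreeAntiHole

open Fin.NatCast

variable {V : Type*} {G : SimpleGraph V} {k : ℕ} [NeZero k] (f : (cycleGraph k)ᶜ ↪g G)

theorem antiHole_adj {a b : ℕ} (hab : a + 2 ≤ b) (hba : b + 2 ≤ a + k) : G.Adj (f a) (f b) :=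
  f.map_adj_iff.mpr (compl_cycleGraph_adj_natCast hab hba)

theorem antiHole_not_adj_succ (a : ℕ) : ¬ G.Adj (f a) (f (a + 1 : ℕ)) :=
  fun h => compl_cycleGraph_not_adj_natCast_succ a (f.map_adj_iff.mp h)

theorem antiHole_ne_succ (hk : 2 ≤ k) (a : ℕ) : f a ≠ f (a + 1 : ℕ) :=
  f.injective.ne (Fin.natCast_ne_natCast_of_lt (by omega) (by omega))

theorem antiHole_add_period (a : ℕ) : f (a + k : ℕ) = f a := by
  rw [Nat.cast_add, Fin.natCast_self, add_zero]

variable {x : V}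

theorem not_adj_of_adj_of_adj_succ (hdart : IsEmpty (dartGraph ↪g G))
    (hx : x ∈ contactSet G (Set.range f)) {n a : ℕ}
    (hn : G.Adj x (f n)) (hn1 : G.Adj x (f (n + 1 : ℕ))) (ha : n + 3 ≤ a) (ha' : a + 2 ≤ n + k) :
    ¬ G.Adj x (f a) := by
  obtain ⟨-, -, w, ⟨-, hw⟩, hxw⟩ := hx
  intro hxa
  exact hdart.false <| dartEmbedding (antiHole_ne_succ f (by omega) n)
    (antiHole_adj f (by omega) (by omega)).symm (antiHole_adj f (by omega) (by omega)).symm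
    hxa.symm hn.symm hn1.symm hxw (antiHole_not_adj_succ f n)
    (fun h => hw _ ⟨_, rfl⟩ h.symm) (fun h => hw _ ⟨_, rfl⟩ h.symm)
    (fun h => hw _ ⟨_, rfl⟩ h.symm)

theorem not_adj_of_adj_of_not_adj_succ_of_not_adj_add_two (hdart : IsEmpty (dartGraph ↪g G))
    (hx : x ∉ Set.range f) {t d : ℕ}
    (ht : G.Adj x (f t)) (ht1 : ¬ G.Adj x (f (t + 1 : ℕ))) (ht2 : ¬ G.Adj x (f (t + 2 : ℕ)))
    (hd : t + 4 ≤ d) (hd' : d + 2 ≤ t + k) : ¬ G.Adj x (f d) := by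
  intro hxd
  exact hdart.false <| dartEmbedding (fun h => hx ⟨_, h.symm⟩) ht.symm
    (antiHole_adj f (by omega) (by omega)) (antiHole_adj f (by omega) (by omega)) hxd
    (antiHole_adj f (by omega) (by omega)) (antiHole_adj f (by omega) (by omega)).symm ht2
    (antiHole_not_adj_succ f t) ht1 (mt G.adj_symm (antiHole_not_adj_succ f (t + 1)))

theorem adj_add_two_of_adj_of_adj_succ (hdart : IsEmpty (dartGraph ↪g G)) (hk : 7 ≤ k)
    (hx : x ∈ contactSet G (Set.range f)) {n : ℕ} (hn : G.Adj x (f n))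
    (hn1 : G.Adj x (f (n + 1 : ℕ))) : G.Adj x (f (n + 2 : ℕ)) := by
  by_contra hn2
  have hn4 := not_adj_of_adj_of_adj_succ f hdart hx hn hn1 (a := n + 4) (by omega) (by omega)
  have hn5 := not_adj_of_adj_of_adj_succ f hdart hx hn hn1 (a := n + 5) (by omega) (by omega)
  exact hdart.false <| dartEmbedding (antiHole_ne_succ f (by omega) (n + 4))
    (antiHole_adj f (by omega) (by omega)) (antiHole_adj f (by omega) (by omega))
    (antiHole_adj f (by omega) (by omega)).symm (antiHole_adj f (by omega) (by omega)).symm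
    (antiHole_adj f (by omega) (by omega)).symm hn.symm (antiHole_not_adj_succ f (n + 4))
    (mt G.adj_symm hn2) (mt G.adj_symm hn4) (mt G.adj_symm hn5)

theorem not_adj_succ_of_adj (hdart : IsEmpty (dartGraph ↪g G)) (hk : 7 ≤ k)
    (hx : x ∈ contactSet G (Set.range f)) {n : ℕ} (hn : G.Adj x (f n)) :
    ¬ G.Adj x (f (n + 1 : ℕ)) := by
  intro hn1
  have hn2 := adj_add_two_of_adj_of_adj_succ f hdart hk hx hn hn1
  have hn3 := adj_add_two_of_adj_of_adj_succ f hdart hk hx hn1 hn2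
  exact not_adj_of_adj_of_adj_succ f hdart hx hn hn1 (by omega) (by omega) hn3

theorem adj_add_two_of_adj (hdart : IsEmpty (dartGraph ↪g G)) (hk : 7 ≤ k)
    (hx : x ∈ contactSet G (Set.range f)) {n : ℕ} (hn : G.Adj x (f n)) :
    G.Adj x (f (n + 2 : ℕ)) := by
  by_contra hn2
  have hn1 := not_adj_succ_of_adj f hdart hk hx hn
  have hn4 := not_adj_of_adj_of_not_adj_succ_of_not_adj_add_two f hdart hx.1 hn hn1 hn2
    (d := n + 4) (by omega) (by omega)
  have hn5 := not_adj_of_adj_of_not_adj_succ_of_not_adj_add_two f hdart hx.1 hn hn1 hn2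
    (d := n + 5) (by omega) (by omega)
  by_cases hn3 : G.Adj x (f (n + 3 : ℕ))
  · -- the dart is centred at `v n`, seen from `n + 3` as `v (n + k)`
    refine not_adj_of_adj_of_not_adj_succ_of_not_adj_add_two f hdart hx.1 hn3 hn4 hn5
      (d := n + k) (by omega) (by omega) ?_
    rwa [antiHole_add_period]
  · exact hdart.false <| dartEmbedding (antiHole_ne_succ f (by omega) (n + 2))
      (antiHole_adj f (by omega) (by omega)).symm (antiHole_adj f (by omega) (by omega)).symm
      (antiHole_adj f (by omega) (by omega)).symm (antiHole_adj f (by omega) (by omega)).symm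
      (antiHole_adj f (by omega) (by omega)).symm hn.symm (antiHole_not_adj_succ f (n + 2))
      (mt G.adj_symm hn5) (mt G.adj_symm hn2) (mt G.adj_symm hn3)

theorem even_and_adj_iff_even_iff (hdart : IsEmpty (dartGraph ↪g G)) (hk : 7 ≤ k)
    (hx : x ∈ contactSet G (Set.range f)) :
    Even k ∧ ∃ i : Fin k, ∀ j : Fin k, G.Adj x (f j) ↔ (Even (j : ℕ) ↔ Even (i : ℕ)) := by
  obtain ⟨-, ⟨i, rfl⟩, hxi⟩ := hx.2.1
  have hper : Function.Periodic (fun n : ℕ => G.Adj x (f n)) k := fun n => by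
    simp only [antiHole_add_period]
  obtain ⟨hkeven, hparity⟩ := Nat.even_and_parity_of_periodic (by omega) hper
    (fun _ => adj_add_two_of_adj f hdart hk hx) (fun _ => not_adj_succ_of_adj f hdart hk hx)
    (i := i) (by simpa using hxi)
  exact ⟨hkeven, i, fun j => by simpa using hparity j⟩

end DartFreeAntiHole

theorem stmt2_general {V : Type*} (G : SimpleGraph V)
    (hdart : IsEmpty (dartGraph ↪g G))
    (k : ℕ) (hk : 7 ≤ k) (f : (cycleGraph k)ᶜ ↪g G)
    (x : V) (hx : x ∈ contactSet G (Set.range f)) :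
    Even k ∧
      ((∀ j : Fin k, G.Adj x (f j) ↔ Odd (j : ℕ)) ∨
        (∀ j : Fin k, G.Adj x (f j) ↔ Even (j : ℕ))) := by
  have : NeZero k := ⟨by omega⟩
  obtain ⟨hkeven, i, hi⟩ := even_and_adj_iff_even_iff f hdart hk hx
  refine ⟨hkeven, ?_⟩
  by_cases hieven : Even (i : ℕ)
  · exact Or.inr fun j => by simp [hi j, hieven]
  · exact Or.inl fun j => by simp [hi j, hieven, ← Nat.not_even_iff_odd]

theorem stmt2 {V : Type*} [Fintype V] (G : SimpleGraph V)
    (hdart : IsEmpty (dartGraph ↪g G))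
    (k : ℕ) (hk : 7 ≤ k) (f : (cycleGraph k)ᶜ ↪g G)
    (hplus : (contactSet G (Set.range f)).Nonempty)
    (x : V) (hx : x ∈ contactSet G (Set.range f)) :
    Even k ∧
      ((∀ j : Fin k, G.Adj x (f j) ↔ Odd (j : ℕ)) ∨
        (∀ j : Fin k, G.Adj x (f j) ↔ Even (j : ℕ))) :=
  stmt2_general G hdart k hk f x hx
end

section
/- Let G be a (hole, dart)-free graph that is an atom (has no clique cutset). Then for every vertex v and every k ≥ 7, the subgraph induced on the anti-neighborhood A(v) contains no induced complement of C_k. -/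
open SimpleGraph

/-!
Let `x` run around the antihole `H` in `A(v)`, and let `R` be the component of `v` among the
vertices outside `H` with no neighbour in `H`. Dart-freeness forces a vertex outside `H` with a
neighbour in `H` to see one of any two consecutive vertices of `H`, and, if it also has a neighbour
outside `H ∪ N(H)`, never both: it sees exactly every other vertex of `H`. Let `C` be the set of
such vertices with a neighbour in `R`. Two nonadjacent vertices of `C` would span a dart with `H`
if they see the same half of `H`, and a hole through `R` otherwise. So `C` is a clique, and it
separates `v` from `H`.
-/

namespace SimpleGraph

variable {V : Type*} {G : SimpleGraph V}

lemma cycleGraph_adj_iff_of_lt {n : ℕ} {i j : Fin n} (h : i < j) :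
    (cycleGraph n).Adj i j ↔ j.val = i.val + 1 ∨ (i.val = 0 ∧ j.val + 1 = n) := by
  rw [cycleGraph_adj', Fin.coe_sub_iff_lt.mpr h, Fin.coe_sub_iff_le.mpr h.le]
  have := j.isLt
  have : i.val < j.val := h
  omega

namespace Walk

def cycleGraphEmbedding {a b : V} (W : G.Walk a b) (hW : W.IsPath) (hba : G.Adj b a)
    (hchord : ∀ i j, i + 1 < j → j ≤ W.length → G.Adj (W.getVert i) (W.getVert j) →
      i = 0 ∧ j = W.length) :
    cycleGraph (W.length + 1) ↪g G where
  toFun i := W.getVert i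
  inj' i j h := Fin.ext (hW.getVert_injOn (Nat.lt_succ_iff.mp i.isLt)
    (Nat.lt_succ_iff.mp j.isLt) h)
  map_rel_iff' {i j} := by
    have key : ∀ i j : Fin (W.length + 1), i < j →
        (G.Adj (W.getVert i) (W.getVert j) ↔ (cycleGraph (W.length + 1)).Adj i j) := by
      intro i j hij
      have hjlt := j.isLt
      have hij' : i.val < j.val := hij
      rw [cycleGraph_adj_iff_of_lt hij]
      refine ⟨fun h => ?_, ?_⟩
      · by_cases hsucc : j.val = i.val + 1
        · exact Or.inl hsucc
        · have := hchord i j (by omega) (by omega) h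
          omega
      · rintro (h | ⟨hi, hj⟩)
        · exact h ▸ W.adj_getVert_succ (by omega)
        · rw [hi, W.getVert_zero, show j.val = W.length by omega, W.getVert_length]
          exact hba.symm
    rcases lt_trichotomy i j with h | rfl | h
    · exact key i j h
    · simp
    · rw [G.adj_comm, (cycleGraph _).adj_comm]
      exact key j i h

lemma exists_shorter_of_adj_getVert {u v : V} (W : G.Walk u v) {i j : ℕ} (hij : i + 1 < j)
    (hj : j ≤ W.length) (hadj : G.Adj (W.getVert i) (W.getVert j)) :
    ∃ S : G.Walk u v, S.length < W.length ∧ S.support ⊆ W.support := by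
  refine ⟨(W.take i).append (cons hadj (W.drop j)), ?_, ?_⟩
  · simp only [length_append, length_cons, take_length, drop_length]
    omega
  · intro z hz
    rw [mem_support_append_iff, support_cons, List.mem_cons] at hz
    rcases hz with hz | rfl | hz
    · exact (W.isSubwalk_take i).support_subset hz
    · exact W.getVert_mem_support i
    · exact (W.isSubwalk_drop j).support_subset hz

theorem exists_chordless_path {u v : V} (W : G.Walk u v) :
    ∃ P : G.Walk u v, P.IsPath ∧ P.support ⊆ W.support ∧
      ∀ i j, i + 1 < j → j ≤ P.length → ¬ G.Adj (P.getVert i) (P.getVert j) := by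
  classical
  induction hn : W.length using Nat.strong_induction_on generalizing W with
  | _ n ih =>
  by_cases hchord : ∃ i j, i + 1 < j ∧ j ≤ W.bypass.length ∧
      G.Adj (W.bypass.getVert i) (W.bypass.getVert j)
  · obtain ⟨i, j, hij, hj, hadj⟩ := hchord
    obtain ⟨S, hS, hSsub⟩ := W.bypass.exists_shorter_of_adj_getVert hij hj hadj
    obtain ⟨P, hP, hPsub, hPc⟩ :=
      ih S.length (hn ▸ hS.trans_le W.length_bypass_le_length) S rfl
    exact ⟨P, hP, fun z hz => W.support_bypass_subset_support (hSsub (hPsub hz)), hPc⟩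
  · push Not at hchord
    exact ⟨W.bypass, W.bypass_isPath, W.support_bypass_subset_support, hchord⟩

lemma getVert_concat_of_le {u v w : V} (W : G.Walk u v) (h : G.Adj v w) {i : ℕ}
    (hi : i ≤ W.length) : (W.concat h).getVert i = W.getVert i := by
  rw [concat_eq_append, getVert_append]
  split_ifs with hlt
  · rfl
  · rw [show i = W.length by omega, Nat.sub_self, getVert_zero, getVert_length]

lemma getVert_concat_length_succ {u v w : V} (W : G.Walk u v) (h : G.Adj v w) :
    (W.concat h).getVert (W.length + 1) = w := by
  simpa using (W.concat h).getVert_length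

theorem nonempty_cycleGraph_embedding {a b p q : V} (P : G.Walk a b) (hP : P.IsPath)
    (hchord : ∀ i j, i + 1 < j → j ≤ P.length → ¬ G.Adj (P.getVert i) (P.getVert j))
    (hqa : G.Adj q a) (hbp : G.Adj b p) (hpq : G.Adj p q)
    (hqP : q ∉ P.support) (hpP : p ∉ P.support)
    (hq : ∀ i, 0 < i → ¬ G.Adj (P.getVert i) q) (hp : ∀ i < P.length, ¬ G.Adj (P.getVert i) p) :
    Nonempty (cycleGraph (P.length + 3) ↪g G) := by
  let W := cons hqa (P.concat hbp)
  have hWlen : W.length = P.length + 2 := by simp [W]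
  have hW : W.IsPath := (cons_isPath_iff _ _).2
    ⟨hP.concat hpP hbp, by simp [support_concat, hqP, hpq.ne.symm]⟩
  have hWmid : ∀ m ≤ P.length, W.getVert (m + 1) = P.getVert m := fun m hm =>
    (getVert_cons_succ _ _).trans (P.getVert_concat_of_le hbp hm)
  have hWend : W.getVert (P.length + 2) = p :=
    (getVert_cons_succ _ _).trans (P.getVert_concat_length_succ hbp)
  refine (by omega : W.length + 1 = P.length + 3) ▸
    ⟨W.cycleGraphEmbedding hW hpq fun i j hij hj hadj => ?_⟩
  rw [hWlen] at hj ⊢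
  obtain ⟨j, rfl⟩ : ∃ j', j = j' + 1 := ⟨j - 1, by omega⟩
  rcases Nat.lt_or_ge j (P.length + 1) with hjP | hjP
  · rw [hWmid j (by omega)] at hadj
    rcases i with _ | i
    · exact absurd hadj.symm (hq j (by omega))
    · rw [hWmid i (by omega)] at hadj
      exact absurd hadj (hchord i j (by omega) (by omega))
  · rw [show j + 1 = P.length + 2 by omega, hWend] at hadj
    rcases i with _ | i
    · exact ⟨rfl, by omega⟩
    · rw [hWmid i (by omega)] at hadj
      exact absurd hadj (hp i (by omega))

end Walk

theorem exists_hole_of_walk {A : Set V} {u₁ u₂ w₁ w₂ p q : V} (W : G.Walk w₁ w₂)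
    (hW : ∀ z ∈ W.support, z ∈ A) (hpA : p ∉ A) (hqA : q ∉ A)
    (hAp : ∀ y ∈ A, ¬ G.Adj y p) (hAq : ∀ y ∈ A, ¬ G.Adj y q)
    (hw₁ : G.Adj u₁ w₁) (hw₂ : G.Adj w₂ u₂) (hqu₁ : G.Adj q u₁) (hu₂p : G.Adj u₂ p)
    (hpq : G.Adj p q) (hu₁p : ¬ G.Adj u₁ p) (hu₂q : ¬ G.Adj u₂ q) (hne : u₁ ≠ u₂)
    (hu : ¬ G.Adj u₁ u₂) : ∃ n, 5 ≤ n ∧ Nonempty (cycleGraph n ↪g G) := by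
  obtain ⟨P, hP, hPsub, hPc⟩ := (Walk.cons hw₁ (W.concat hw₂)).exists_chordless_path
  have hsupp : ∀ z ∈ P.support, z = u₁ ∨ z = u₂ ∨ z ∈ A := by
    intro z hz
    have := hPsub hz
    simp only [Walk.support_cons, Walk.support_concat, List.mem_cons, List.mem_append,
      List.not_mem_nil, or_false] at this
    rcases this with h | h | h
    · exact Or.inl h
    · exact Or.inr (Or.inr (hW z h))
    · exact Or.inr (Or.inl h)
  have hlen : 2 ≤ P.length := by
    by_contra! hlt
    interval_cases h : P.length
    · exact hne (Walk.eq_of_length_eq_zero h)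
    · exact hu (Walk.adj_of_length_eq_one h)
  have hint : ∀ i, 0 < i → i < P.length → P.getVert i ∈ A := by
    intro i hi0 hil
    rcases hsupp _ (P.getVert_mem_support i) with h | h | h
    · have := hP.getVert_injOn (by simp; omega) (by simp) (h.trans P.getVert_zero.symm)
      omega
    · have := hP.getVert_injOn (by simp; omega) (by simp) (h.trans P.getVert_length.symm)
      omega
    · exact h
  refine ⟨P.length + 3, by omega,
    P.nonempty_cycleGraph_embedding hP hPc hqu₁ hu₂p hpq ?_ ?_ ?_ ?_⟩
  · intro hq
    rcases hsupp q hq with rfl | rfl | h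
    · exact G.irrefl hqu₁
    · exact hu hqu₁.symm
    · exact hqA h
  · intro hp
    rcases hsupp p hp with rfl | rfl | h
    · exact hu hu₂p.symm
    · exact G.irrefl hu₂p
    · exact hpA h
  · intro i hi
    rcases Nat.lt_or_ge i P.length with hil | hil
    · exact hAq _ (hint i hi hil)
    · rwa [P.getVert_of_length_le hil]
  · intro i hil
    rcases Nat.eq_zero_or_pos i with rfl | hi
    · rwa [P.getVert_zero]
    · exact hAp _ (hint i hi hil)

theorem not_preconnected_induce_compl {C : Set V} {a b : V} (ha : a ∉ C) (hb : b ∉ C)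
    (h : ∀ W : G.Walk a b, ∃ z ∈ W.support, z ∈ C) : ¬ (G.induce Cᶜ).Preconnected := by
  intro hpre
  obtain ⟨W⟩ := hpre ⟨a, ha⟩ ⟨b, hb⟩
  obtain ⟨z, hz, hzC⟩ := h (W.map (Embedding.induce Cᶜ).toHom)
  have hz' : z ∈ W.support.map (Embedding.induce (G := G) Cᶜ).toHom := by
    rw [← Walk.support_map]
    exact hz
  obtain ⟨z, -, rfl⟩ := List.mem_map.mp hz'
  exact z.prop hzC

def dartEmbedding {a b c d e : V} (hab : G.Adj a b) (hac : G.Adj a c) (had : G.Adj a d)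
    (hbd : G.Adj b d) (hcd : G.Adj c d) (hde : G.Adj d e) (hbc : ¬ G.Adj b c)
    (hae : ¬ G.Adj a e) (hbe : ¬ G.Adj b e) (hce : ¬ G.Adj c e)
    (nbc : b ≠ c) (nae : a ≠ e) (nbe : b ≠ e) (nce : c ≠ e) : dartGraph ↪g G where
  toFun := ![a, b, c, d, e]
  inj' i j hij := by
    fin_cases i <;> fin_cases j <;>
      simp_all [eq_comm, hab.ne, hac.ne, had.ne, hbd.ne, hcd.ne, hde.ne]
  map_rel_iff' {i j} := by
    change G.Adj (![a, b, c, d, e] i) (![a, b, c, d, e] j) ↔ _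
    fin_cases i <;> fin_cases j <;> simp [dartGraph, G.adj_comm, *]

end SimpleGraph

theorem Int.modEq_iff_eq_of_sub_lt {a b : ℤ} {k : ℕ} (h₁ : a - b < k) (h₂ : b - a < k) :
    a ≡ b [ZMOD k] ↔ a = b := by
  refine ⟨fun h => ?_, fun h => h ▸ rfl⟩
  have := Int.eq_zero_of_abs_lt_dvd h.dvd (abs_lt.2 ⟨by omega, by omega⟩)
  omega

section Antihole

variable {V : Type*} {G : SimpleGraph V} {k : ℕ} {x : ℤ → V}

/-- `x i` is the `(i mod k)`-th vertex of an induced complement of `C_k`; indexing by `ℤ` lets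
offsets such as `j - 1` or `j + 5` be written without wrap-around cases. -/
structure IsAntihole (G : SimpleGraph V) (k : ℕ) (x : ℤ → V) : Prop where
  eq_iff : ∀ i j, x i = x j ↔ i ≡ j [ZMOD k]
  adj_iff : ∀ i j, G.Adj (x i) (x j) ↔
    ¬ i ≡ j [ZMOD k] ∧ ¬ i ≡ j + 1 [ZMOD k] ∧ ¬ j ≡ i + 1 [ZMOD k]

theorem exists_isAntihole_of_embedding {S : Set V} (hk : 2 ≤ k)
    (e : (cycleGraph k)ᶜ ↪g G.induce S) : ∃ x : ℤ → V, IsAntihole G k x ∧ ∀ i, x i ∈ S := by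
  obtain ⟨m, rfl⟩ : ∃ m, k = m + 2 := ⟨k - 2, by omega⟩
  let φ := (ZMod.finEquiv (m + 2)).symm
  have hsub : ∀ a b : ℤ, φ a - φ b = 1 ↔ a ≡ b + 1 [ZMOD (m + 2 : ℕ)] := by
    intro a b
    rw [← map_sub, ← map_one φ, φ.injective.eq_iff, sub_eq_iff_eq_add',
      ← ZMod.intCast_eq_intCast_iff]
    push_cast
    rfl
  refine ⟨fun i => e (φ i), ⟨fun i j => ?_, fun i j => ?_⟩, fun i => (e (φ i)).prop⟩
  · rw [Subtype.val_inj, e.injective.eq_iff, φ.injective.eq_iff, ZMod.intCast_eq_intCast_iff]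
  · change (G.induce S).Adj (e (φ i)) (e (φ j)) ↔ _
    rw [e.map_adj_iff, compl_adj, cycleGraph_adj, hsub, hsub, Ne, φ.injective.eq_iff,
      ZMod.intCast_eq_intCast_iff]
    tauto

namespace IsAntihole

theorem ne (hx : IsAntihole G k x) (hk : 7 ≤ k) (i j : ℤ)
    (h : i ≠ j ∧ i - j ≤ 6 ∧ j - i ≤ 6 := by omega) : x i ≠ x j := by
  rw [Ne, hx.eq_iff, Int.modEq_iff_eq_of_sub_lt (by omega) (by omega)]
  exact h.1

theorem adj (hx : IsAntihole G k x) (hk : 7 ≤ k) (i j : ℤ)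
    (h : (2 ≤ i - j ∨ 2 ≤ j - i) ∧ i - j ≤ 5 ∧ j - i ≤ 5 := by omega) : G.Adj (x i) (x j) := by
  rw [hx.adj_iff, Int.modEq_iff_eq_of_sub_lt (by omega) (by omega),
    Int.modEq_iff_eq_of_sub_lt (by omega) (by omega),
    Int.modEq_iff_eq_of_sub_lt (by omega) (by omega)]
  omega

theorem not_adj (hx : IsAntihole G k x) (i j : ℤ) (h : j = i + 1 ∨ i = j + 1 := by omega) :
    ¬ G.Adj (x i) (x j) := by
  rw [hx.adj_iff]
  rcases h with rfl | rfl
  · exact fun h => h.2.2 rfl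
  · exact fun h => h.2.1 rfl

theorem not_adj_of_not_adj_succ_of_not_adj_add_two (hx : IsAntihole G k x) (hk : 7 ≤ k)
    (hdart : IsEmpty (dartGraph ↪g G)) {u : V} (hu : u ∉ Set.range x) {j : ℤ}
    (h₁ : ¬ G.Adj u (x (j + 1))) (h₂ : ¬ G.Adj u (x (j + 2))) : ¬ G.Adj u (x j) := by
  intro h₀
  have hux : ∀ i, u ≠ x i := fun i h => hu ⟨i, h.symm⟩
  by_cases hfar : ∃ m, (m = j + 4 ∨ m = j + 5) ∧ G.Adj u (x m)
  · obtain ⟨m, hm, hum⟩ := hfar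
    -- the dart `(x j, u, x (j + 2), x m, x (j + 1))`
    exact hdart.false <| dartEmbedding h₀.symm (hx.adj hk j (j + 2)) (hx.adj hk j m) hum
      (hx.adj hk (j + 2) m) (hx.adj hk m (j + 1)) h₂ (hx.not_adj j (j + 1)) h₁
      (hx.not_adj (j + 2) (j + 1)) (hux _) (hx.ne hk j (j + 1)) (hux _)
      (hx.ne hk (j + 2) (j + 1))
  · push Not at hfar
    -- the dart `(x (j + 2), x (j + 4), x (j + 5), x j, u)`
    exact hdart.false <| dartEmbedding (hx.adj hk (j + 2) (j + 4)) (hx.adj hk (j + 2) (j + 5))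
      (hx.adj hk (j + 2) j) (hx.adj hk (j + 4) j) (hx.adj hk (j + 5) j) h₀.symm
      (hx.not_adj (j + 4) (j + 5)) (fun h => h₂ h.symm) (fun h => hfar _ (Or.inl rfl) h.symm)
      (fun h => hfar _ (Or.inr rfl) h.symm) (hx.ne hk (j + 4) (j + 5)) (hux _).symm
      (hux _).symm (hux _).symm

theorem adj_or_adj_succ (hx : IsAntihole G k x) (hk : 7 ≤ k) (hdart : IsEmpty (dartGraph ↪g G))
    {u : V} (hu : u ∉ Set.range x) (hN : ∃ i, G.Adj u (x i)) (i : ℤ) :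
    G.Adj u (x i) ∨ G.Adj u (x (i + 1)) := by
  by_contra! h
  have hback : ∀ m : ℕ, ¬ G.Adj u (x (i - m)) ∧ ¬ G.Adj u (x (i - m + 1)) := by
    intro m
    induction m with
    | zero => simpa using h
    | succ m ih =>
      have e₁ : i - ↑(m + 1) + 1 = i - m := by push_cast; ring
      have e₂ : i - ↑(m + 1) + 2 = i - m + 1 := by push_cast; ring
      exact ⟨hx.not_adj_of_not_adj_succ_of_not_adj_add_two hk hdart hu (e₁ ▸ ih.1) (e₂ ▸ ih.2),
        e₁ ▸ ih.1⟩
  obtain ⟨a, ha⟩ := hN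
  have hmod : x (i - ((i - a) % k).toNat) = x a := by
    rw [hx.eq_iff, Int.toNat_of_nonneg (Int.emod_nonneg _ (by omega))]
    calc i - (i - a) % k ≡ i - (i - a) [ZMOD k] := (Int.mod_modEq _ _).sub_left i
      _ = a := by ring
  exact (hback _).1 (hmod ▸ ha)

theorem not_adj_and_adj_succ (hx : IsAntihole G k x) (hk : 7 ≤ k)
    (hdart : IsEmpty (dartGraph ↪g G)) {u w : V} (hu : u ∉ Set.range x)
    (hN : ∃ i, G.Adj u (x i)) (huw : G.Adj u w) (hw : w ∈ antiNbhd G (Set.range x)) (i : ℤ) :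
    ¬ (G.Adj u (x i) ∧ G.Adj u (x (i + 1))) := by
  rintro ⟨h₀, h₁⟩
  obtain ⟨m, hm, hum⟩ : ∃ m, (m = i + 3 ∨ m = i + 4) ∧ G.Adj u (x m) := by
    rcases hx.adj_or_adj_succ hk hdart hu hN (i + 3) with h | h
    · exact ⟨_, Or.inl rfl, h⟩
    · exact ⟨_, Or.inr (by ring), h⟩
  have hxw : ∀ j, x j ≠ w := fun j h => hw.1 ⟨j, h⟩
  have hwx : ∀ j, ¬ G.Adj (x j) w := fun j h => hw.2 _ ⟨j, rfl⟩ h.symm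
  -- the dart `(x m, x i, x (i + 1), u, w)`
  exact hdart.false <| dartEmbedding (hx.adj hk m i) (hx.adj hk m (i + 1)) hum.symm h₀.symm
    h₁.symm huw (hx.not_adj i (i + 1)) (hwx m) (hwx i) (hwx (i + 1)) (hx.ne hk i (i + 1))
    (hxw m) (hxw i) (hxw (i + 1))

theorem adj_iff_not_adj_prev (hx : IsAntihole G k x) (hk : 7 ≤ k)
    (hdart : IsEmpty (dartGraph ↪g G)) {u w : V} (hu : u ∉ Set.range x)
    (hN : ∃ i, G.Adj u (x i)) (huw : G.Adj u w) (hw : w ∈ antiNbhd G (Set.range x))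
    (i j : ℤ) (hij : j = i + 1) : G.Adj u (x j) ↔ ¬ G.Adj u (x i) := by
  subst hij
  exact ⟨fun h h' => hx.not_adj_and_adj_succ hk hdart hu hN huw hw i ⟨h', h⟩,
    (hx.adj_or_adj_succ hk hdart hu hN i).resolve_left⟩

theorem adj_of_contact (hx : IsAntihole G k x) (hk : 7 ≤ k)
    (hhole : ∀ n, 5 ≤ n → IsEmpty (cycleGraph n ↪g G)) (hdart : IsEmpty (dartGraph ↪g G))
    {u₁ u₂ w₁ w₂ : V} (hne : u₁ ≠ u₂) (hu₁ : u₁ ∉ Set.range x) (hu₂ : u₂ ∉ Set.range x)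
    (hN₁ : ∃ i, G.Adj u₁ (x i)) (hN₂ : ∃ i, G.Adj u₂ (x i)) (huw₁ : G.Adj u₁ w₁)
    (huw₂ : G.Adj u₂ w₂) (W : G.Walk w₁ w₂)
    (hW : ∀ z ∈ W.support, z ∈ antiNbhd G (Set.range x)) : G.Adj u₁ u₂ := by
  by_contra hu
  have alt₁ := hx.adj_iff_not_adj_prev hk hdart hu₁ hN₁ huw₁ (hW _ W.start_mem_support)
  have alt₂ := hx.adj_iff_not_adj_prev hk hdart hu₂ hN₂ huw₂ (hW _ W.end_mem_support)
  have hux : ∀ i, u₁ ≠ x i ∧ u₂ ≠ x i := fun i =>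
    ⟨fun h => hu₁ ⟨i, h.symm⟩, fun h => hu₂ ⟨i, h.symm⟩⟩
  obtain ⟨j, hj⟩ := hN₁
  have h₁₁ : ¬ G.Adj u₁ (x (j + 1)) := fun h => (alt₁ j _ rfl).1 h hj
  have h₁₂ : G.Adj u₁ (x (j + 2)) := (alt₁ (j + 1) _ (by ring)).2 h₁₁
  by_cases h₂ : G.Adj u₂ (x j)
  · have h₂₁ : ¬ G.Adj u₂ (x (j + 1)) := fun h => (alt₂ j _ rfl).1 h h₂
    have h₂₂ : G.Adj u₂ (x (j + 2)) := (alt₂ (j + 1) _ (by ring)).2 h₂₁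
    -- the dart `(x j, u₁, u₂, x (j + 2), x (j - 1))`
    exact hdart.false <| dartEmbedding hj.symm h₂.symm (hx.adj hk j (j + 2)) h₁₂ h₂₂
      (hx.adj hk (j + 2) (j - 1)) hu (hx.not_adj j (j - 1)) ((alt₁ (j - 1) j (by ring)).1 hj)
      ((alt₂ (j - 1) j (by ring)).1 h₂) hne (hx.ne hk j (j - 1)) (hux _).1 (hux _).2
  · have h₂₃ : G.Adj u₂ (x (j + 3)) :=
      (alt₂ (j + 2) _ (by ring)).2 fun h => (alt₂ (j + 1) _ (by ring)).1 h ((alt₂ j _ rfl).2 h₂)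
    have h₁₃ : ¬ G.Adj u₁ (x (j + 3)) := fun h => (alt₁ (j + 2) _ (by ring)).1 h h₁₂
    -- a hole `x j, u₁, …(through W)…, u₂, x (j + 3)`
    obtain ⟨n, hn, ⟨e⟩⟩ := exists_hole_of_walk W hW (fun h => h.1 ⟨j + 3, rfl⟩)
      (fun h => h.1 ⟨j, rfl⟩) (fun y hy => hy.2 _ ⟨j + 3, rfl⟩) (fun y hy => hy.2 _ ⟨j, rfl⟩)
      huw₁ huw₂.symm hj.symm h₂₃ (hx.adj hk (j + 3) j) h₁₃ h₂ hne hu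
    exact (hhole n hn).false e

theorem hasCliqueCutset (hx : IsAntihole G k x) (hk : 7 ≤ k)
    (hhole : ∀ n, 5 ≤ n → IsEmpty (cycleGraph n ↪g G)) (hdart : IsEmpty (dartGraph ↪g G))
    {v : V} (hv : v ∈ antiNbhd G (Set.range x)) : HasCliqueCutset G := by
  set A := antiNbhd G (Set.range x)
  set R : Set V := {w | ∃ W : G.Walk v w, ∀ z ∈ W.support, z ∈ A}
  set C : Set V := {u | u ∉ Set.range x ∧ (∃ i, G.Adj u (x i)) ∧ ∃ w ∈ R, G.Adj u w}
  refine ⟨C, ?_, not_preconnected_induce_compl (a := v) (b := x 0) ?_ ?_ ?_⟩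
  · rintro u₁ ⟨hu₁, hN₁, w₁, ⟨W₁, hW₁⟩, huw₁⟩ u₂ ⟨hu₂, hN₂, w₂, ⟨W₂, hW₂⟩, huw₂⟩ hne
    refine hx.adj_of_contact hk hhole hdart hne hu₁ hu₂ hN₁ hN₂ huw₁ huw₂
      (W₁.reverse.append W₂) fun z hz => ?_
    rw [Walk.mem_support_append_iff, Walk.support_reverse, List.mem_reverse] at hz
    exact hz.elim (hW₁ z) (hW₂ z)
  · rintro ⟨-, ⟨i, hi⟩, -⟩
    exact hv.2 _ ⟨i, rfl⟩ hi
  · rintro ⟨h, -⟩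
    exact h ⟨0, rfl⟩
  · -- the first vertex outside `R` on a walk from `v` to `x 0` lies in `C`
    intro W
    obtain ⟨d, hd, ⟨W', hW'⟩, hdR⟩ := W.exists_boundary_dart R ⟨Walk.nil, by simpa using hv⟩
      fun ⟨W', hW'⟩ => (hW' _ W'.end_mem_support).1 ⟨0, rfl⟩
    have hfst := hW' _ W'.end_mem_support
    have hsnd : d.snd ∉ Set.range x := by
      rintro ⟨i, hi⟩
      exact hfst.2 _ ⟨i, rfl⟩ (hi ▸ d.adj)
    refine ⟨d.snd, W.dart_snd_mem_support_of_mem_darts hd, hsnd, ?_, d.fst, ⟨W', hW'⟩,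
      d.adj.symm⟩
    by_contra! hno
    refine hdR ⟨W'.concat d.adj, fun z hz => ?_⟩
    rw [Walk.support_concat, List.mem_append, List.mem_singleton] at hz
    rcases hz with hz | rfl
    · exact hW' z hz
    · exact ⟨hsnd, fun y ⟨i, hi⟩ => hi ▸ hno i⟩

end IsAntihole

end Antihole

theorem stmt5_general {V : Type*} (G : SimpleGraph V)
    (hhole : ∀ k : ℕ, 5 ≤ k → IsEmpty (cycleGraph k ↪g G))
    (hdart : IsEmpty (dartGraph ↪g G))
    (hatom : ¬ HasCliqueCutset G)
    (v : V) (k : ℕ) (hk : 7 ≤ k) :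
    IsEmpty ((cycleGraph k)ᶜ ↪g G.induce (vertexAnti G v)) := by
  refine ⟨fun e => hatom ?_⟩
  obtain ⟨x, hx, hxv⟩ := exists_isAntihole_of_embedding (by omega) e
  refine hx.hasCliqueCutset hk hhole hdart (v := v) ⟨?_, ?_⟩
  · rintro ⟨i, hi⟩
    exact (hxv i).1 hi
  · rintro _ ⟨i, rfl⟩ h
    exact (hxv i).2 h

theorem stmt5 {V : Type*} [Fintype V] (G : SimpleGraph V)
    (hconn : G.Connected)
    (hhole : ∀ k : ℕ, 5 ≤ k → IsEmpty (cycleGraph k ↪g G))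
    (hdart : IsEmpty (dartGraph ↪g G))
    (hatom : ¬ HasCliqueCutset G)
    (v : V) (k : ℕ) (hk : 7 ≤ k) :
    IsEmpty ((cycleGraph k)ᶜ ↪g G.induce (vertexAnti G v)) :=
  stmt5_general G hhole hdart hatom v k hk
end

section
/- Let G be a connected bull-free graph containing an induced complement of C_k for k ≥ 6, say H with vertices v_1,...,v_k and non-edges exactly v_i v_{i+1} (indices mod k), such that the anti-neighborhood A(H) is nonempty. If u is a contact vertex of H (u is adjacent to some vertex of H and to some vertex of A(H)), then u is adjacent to every vertex of H. -/
open SimpleGraph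

/-!
Let `w ∈ A(H)` be a neighbour of `u`. Bull-freeness yields two closure rules for the set `T` of
indices `i` with `u ∼ vᵢ`. If `u` sees two adjacent vertices `vₓ, v_y` of `H` and `v_z` is adjacent
to `vₓ` but not to `v_y`, then `u ∼ v_z`, since otherwise `w u vₓ v_z` with apex `v_y` is a bull.
If `u ∼ vₐ`, then `u` sees one of `vₐ₊₂, vₐ₋₂, vₐ₋₁`, since otherwise `u vₐ vₐ₊₂ vₐ₋₁` with apex
`vₐ₋₂` is a bull. Now if `T` were proper, take `b ∈ T` with `b + 1 ∉ T`: the first rule keeps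
`b - 2` and `b - 3` out of `T` and puts `b - 1` in (via `b + 2`), and then the second rule at
`b - 1` has nowhere to go.
-/

section CycleGraphCompl

open Fin.CommRing

lemma Fin.natCast_ne_natCast_of_lt_s8 {m : ℕ} [NeZero m] {a b : ℕ} (hab : a ≠ b) (ha : a < m)
    (hb : b < m) : (a : Fin m) ≠ b := by
  rwa [Ne, Fin.ext_iff, Fin.val_cast_of_lt ha, Fin.val_cast_of_lt hb]

lemma Fin.exists_and_not_add_one {m : ℕ} [NeZero m] {T : Fin m → Prop} {a b : Fin m} (ha : T a)
    (hb : ¬ T b) : ∃ c, T c ∧ ¬ T (c + 1) := by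
  by_contra! h
  have hshift : ∀ l : ℕ, T (a + l) := by
    intro l
    induction l with
    | zero => simpa using ha
    | succ l ih => simpa [add_assoc] using h _ ih
  exact hb (by simpa using hshift (b - a).val)

variable {n : ℕ}

lemma cycleGraph_compl_adj_iff {p q : Fin (n + 2)} :
    (cycleGraph (n + 2))ᶜ.Adj p q ↔ p ≠ q ∧ p ≠ q + 1 ∧ q ≠ p + 1 := by
  rw [compl_adj, cycleGraph_adj, sub_eq_iff_eq_add, sub_eq_iff_eq_add, add_comm 1, add_comm 1]
  tauto

lemma not_cycleGraph_compl_adj_of_eq_add_one {p q : Fin (n + 2)} (h : q = p + 1) :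
    ¬ (cycleGraph (n + 2))ᶜ.Adj p q :=
  fun hpq => (cycleGraph_compl_adj_iff.1 hpq).2.2 h

lemma cycleGraph_compl_adj_of_eq_add {p q : Fin (n + 2)} {d : ℕ} (hd : 2 ≤ d)
    (hdn : d ≤ n) (h : q = p + d) : (cycleGraph (n + 2))ᶜ.Adj p q := by
  have h0 : ((0 : ℕ) : Fin (n + 2)) ≠ d :=
    Fin.natCast_ne_natCast_of_lt_s8 (by omega) (by omega) (by omega)
  have h1 : ((1 : ℕ) : Fin (n + 2)) ≠ d :=
    Fin.natCast_ne_natCast_of_lt_s8 (by omega) (by omega) (by omega)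
  have h2 : ((0 : ℕ) : Fin (n + 2)) ≠ (d + 1 : ℕ) :=
    Fin.natCast_ne_natCast_of_lt_s8 (by omega) (by omega) (by omega)
  push_cast at h0 h1 h2
  subst h
  exact cycleGraph_compl_adj_iff.2 ⟨fun h => h0 (by linear_combination h),
    fun h => h2 (by linear_combination h), fun h => h1 (by linear_combination -h)⟩

lemma forall_of_cycleGraph_compl_closed (hn : 4 ≤ n) {T : Fin (n + 2) → Prop}
    (hpendant : ∀ x y z, T x → T y → (cycleGraph (n + 2))ᶜ.Adj x y →
      (cycleGraph (n + 2))ᶜ.Adj x z → ¬ (cycleGraph (n + 2))ᶜ.Adj y z → T z)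
    (hinner : ∀ a, T a → T (a + 2) ∨ T (a - 2) ∨ T (a - 1))
    {i : Fin (n + 2)} (hi : T i) : ∀ j, T j := by
  by_contra! ⟨j, hj⟩
  obtain ⟨b, hb, hb1⟩ := Fin.exists_and_not_add_one hi hj
  have hbm2 : ¬ T (b - 2) := fun h => hb1 <| hpendant _ _ _ h hb
    (cycleGraph_compl_adj_of_eq_add (d := 2) le_rfl (by omega) (by ring))
    (cycleGraph_compl_adj_of_eq_add (d := 3) (by norm_num) (by omega) (by ring))
    (not_cycleGraph_compl_adj_of_eq_add_one rfl)
  have hbm3 : ¬ T (b - 3) := fun h => hb1 <| hpendant _ _ _ h hb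
    (cycleGraph_compl_adj_of_eq_add (d := 3) (by norm_num) (by omega) (by ring))
    (cycleGraph_compl_adj_of_eq_add (d := 4) (by norm_num) (by omega) (by ring))
    (not_cycleGraph_compl_adj_of_eq_add_one rfl)
  have hbm1 : T (b - 1) := by
    rcases hinner b hb with h | h | h
    · exact hpendant _ _ _ h hb
        (cycleGraph_compl_adj_of_eq_add (d := 2) le_rfl (by omega) rfl).symm
        (cycleGraph_compl_adj_of_eq_add (d := 3) (by norm_num) (by omega) (by ring)).symm
        fun h' => not_cycleGraph_compl_adj_of_eq_add_one (by ring) h'.symm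
    · exact absurd h hbm2
    · exact h
  rcases hinner _ hbm1 with h | h | h
  · exact hb1 (by convert h using 1; ring)
  · exact hbm3 (by convert h using 1; ring)
  · exact hbm2 (by convert h using 1; ring)

end CycleGraphCompl

section BullFree

variable {V : Type*} {G : SimpleGraph V}

lemma adj_of_isEmpty_bullGraph_embedding (hbull : IsEmpty (bullGraph ↪g G)) {w u x y z : V}
    (hwu : G.Adj w u) (hux : G.Adj u x) (huy : G.Adj u y) (hxy : G.Adj x y) (hxz : G.Adj x z)
    (hyz : ¬ G.Adj y z) (hwx : ¬ G.Adj w x) (hwy : ¬ G.Adj w y) (hwz : ¬ G.Adj w z) :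
    G.Adj u z := by
  by_contra huz
  have hwx' : w ≠ x := by rintro rfl; exact hwy hxy
  have hwy' : w ≠ y := by rintro rfl; exact hwx hxy.symm
  have hwz' : w ≠ z := by rintro rfl; exact hwx hxz.symm
  have huz' : u ≠ z := by rintro rfl; exact hyz huy.symm
  have hyz' : y ≠ z := by rintro rfl; exact huz huy
  have := hwu.ne; have := hux.ne; have := huy.ne; have := hxy.ne; have := hxz.ne
  refine hbull.false ⟨⟨![w, u, x, z, y], fun i j h => ?_⟩, fun {i j} => ?_⟩
  · fin_cases i <;> fin_cases j <;> simp_all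
  · show G.Adj (![w, u, x, z, y] i) (![w, u, x, z, y] j) ↔ bullGraph.Adj i j
    fin_cases i <;> fin_cases j <;> simp [bullGraph, G.adj_comm, *]

open Fin.CommRing in
lemma adj_add_two_or_sub_two_or_sub_one {n : ℕ} (hbull : IsEmpty (bullGraph ↪g G)) (hn : 4 ≤ n)
    (f : (cycleGraph (n + 2))ᶜ ↪g G) {u : V} {a : Fin (n + 2)} (ha : G.Adj u (f a)) :
    G.Adj u (f (a + 2)) ∨ G.Adj u (f (a - 2)) ∨ G.Adj u (f (a - 1)) := by
  by_contra! ⟨h2, hm2, hm1⟩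
  refine not_cycleGraph_compl_adj_of_eq_add_one (p := a - 1) (q := a) (by ring) <|
    f.map_adj_iff.1 (adj_of_isEmpty_bullGraph_embedding hbull ha ?_ ?_ ?_ ?_ ?_ h2 hm2 hm1).symm
  · exact f.map_adj_iff.2 (cycleGraph_compl_adj_of_eq_add (d := 2) le_rfl (by omega) rfl)
  · exact f.map_adj_iff.2 (cycleGraph_compl_adj_of_eq_add (d := 2) le_rfl (by omega) (by ring)).symm
  · exact f.map_adj_iff.2 (cycleGraph_compl_adj_of_eq_add (d := 4) (by norm_num) hn (by ring)).symm
  · exact f.map_adj_iff.2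
      (cycleGraph_compl_adj_of_eq_add (d := 3) (by norm_num) (by omega) (by ring)).symm
  · exact mt f.map_adj_iff.1 (not_cycleGraph_compl_adj_of_eq_add_one (by ring))

end BullFree

theorem stmt8_general {V : Type*} (G : SimpleGraph V)
    (hbull : IsEmpty (bullGraph ↪g G))
    (k : ℕ) (hk : 6 ≤ k) (f : (cycleGraph k)ᶜ ↪g G)
    (u : V) (hu : u ∈ contactSet G (Set.range f)) :
    ∀ i : Fin k, G.Adj u (f i) := by
  obtain ⟨n, rfl⟩ : ∃ n, k = n + 2 := ⟨k - 2, by omega⟩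
  obtain ⟨-, ⟨-, ⟨i, rfl⟩, hui⟩, w, ⟨-, hw⟩, huw⟩ := hu
  refine forall_of_cycleGraph_compl_closed (by omega) (fun x y z hx hy hxy hxz hyz => ?_)
    (fun _ => adj_add_two_or_sub_two_or_sub_one hbull (by omega) f) hui
  exact adj_of_isEmpty_bullGraph_embedding hbull huw.symm hx hy (f.map_adj_iff.2 hxy)
    (f.map_adj_iff.2 hxz) (mt f.map_adj_iff.1 hyz) (hw _ ⟨x, rfl⟩) (hw _ ⟨y, rfl⟩) (hw _ ⟨z, rfl⟩)

theorem stmt8 {V : Type*} [Fintype V] (G : SimpleGraph V)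
    (hconn : G.Connected)
    (hbull : IsEmpty (bullGraph ↪g G))
    (k : ℕ) (hk : 6 ≤ k) (f : (cycleGraph k)ᶜ ↪g G)
    (hA : (antiNbhd G (Set.range f)).Nonempty)
    (u : V) (hu : u ∈ contactSet G (Set.range f)) :
    ∀ i : Fin k, G.Adj u (f i) :=
  stmt8_general G hbull k hk f u hu
end

section
/- Every prime bull-free graph is nearly \overline{C_ℓ}-free for every ℓ ≥ 6: for every vertex v, the subgraph induced on the anti-neighborhood A(v) contains no induced complement of C_ℓ with ℓ ≥ 6. -/
open SimpleGraph

/-! Let `c` embed the complement of `C_ℓ`, `ℓ ≥ 6`, into `G` with image `K ⊆ A(v)`, and let `B` be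
the set of vertices anticomplete to `K`, so `v ∈ B`. A vertex outside `B` with a neighbour in `B`
is complete to `K`: otherwise it sees some `c i` but not `c (i + 1)`, and the five consecutive
vertices `c i, …, c (i + 4)`, which induce the complement of `P_5`, give a bull together with it
and its neighbour in `B`. Let `M` be the set of vertices outside `B` complete to all these boundary
vertices. Then `K ⊆ M`, and a bull argument shows that a vertex outside `B` with a non-neighbour in
`M` belongs to `M`. Hence `M` is a module: vertices of `B` have no neighbour in `M`, and the other
vertices outside `M` are complete to it. As `K ⊆ M` and `v ∉ M`, the module is nontrivial. -/

section

variable {V : Type*} {G : SimpleGraph V}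

theorem not_isEmpty_bullGraph_embedding {a b c d e : V}
    (hab : G.Adj a b) (hbc : G.Adj b c) (hcd : G.Adj c d) (hbe : G.Adj b e) (hce : G.Adj c e)
    (hac : ¬G.Adj a c) (had : ¬G.Adj a d) (hae : ¬G.Adj a e) (hbd : ¬G.Adj b d)
    (hde : ¬G.Adj d e) : ¬IsEmpty (bullGraph ↪g G) := by
  have nac : a ≠ c := fun h => had (h ▸ hcd)
  have nad : a ≠ d := fun h => hbd (h ▸ hab.symm)
  have nae : a ≠ e := fun h => hac (h ▸ hce.symm)
  have nbd : b ≠ d := fun h => hde (h ▸ hbe)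
  have nde : d ≠ e := fun h => hbd (h ▸ hbe)
  refine fun h => h.false ⟨⟨![a, b, c, d, e], ?_⟩, ?_⟩
  · intro i j hij
    fin_cases i <;> fin_cases j <;> simp_all [G.ne_of_adj, Ne.symm, eq_comm]
  · intro i j
    fin_cases i <;> fin_cases j <;> simp [bullGraph, fromEdgeSet_adj, G.adj_comm] <;> tauto

theorem Fin.exists_and_not_add_one_s9 {n : ℕ} [NeZero n] {P : Fin n → Prop} {i j : Fin n}
    (hi : P i) (hj : ¬P j) : ∃ k, P k ∧ ¬P (k + 1) := by
  open Fin.NatCast in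
  by_contra! h
  have : ∀ m : ℕ, P (i + m) := fun m => by
    induction m with
    | zero => simpa using hi
    | succ m ih => simpa [add_assoc] using h _ ih
  exact hj (by simpa using this (j - i).val)

theorem Fin.val_sub_eq_one_iff {n : ℕ} {x y : Fin n} (hy : y.val + 2 ≤ n) :
    (x - y).val = 1 ↔ x.val = y.val + 1 := by
  rcases le_or_gt y x with h | h
  · rw [Fin.sub_val_of_le h]; omega
  · rw [Fin.coe_sub_iff_lt.mpr h]; omega

theorem exists_compl_pathGraph_embedding_compl_cycleGraph {n : ℕ} [NeZero n] (hn : 6 ≤ n)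
    (i : Fin n) :
    ∃ w : (pathGraph 5)ᶜ ↪g (cycleGraph n)ᶜ, w 0 = i ∧ w 1 = i + 1 := by
  let w (a : Fin 5) : Fin n := i + Fin.castLE (by omega) a
  have hw : Function.Injective w := fun a b h => by simpa [w] using h
  have hsub (a b : Fin 5) : (w a - w b).val = 1 ↔ a.val = b.val + 1 := by
    rw [add_sub_add_left_eq_sub, Fin.val_sub_eq_one_iff (by simp; omega)]; simp
  refine ⟨⟨⟨w, hw⟩, fun {a b} => ?_⟩, ?_, ?_⟩
  · simp only [Function.Embedding.coeFn_mk, compl_adj, hw.ne_iff, cycleGraph_adj', pathGraph_adj,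
      hsub]
    omega
  all_goals ext; simp [w, Fin.val_add, Nat.mod_eq_of_lt i.isLt]

theorem compl_pathGraph_adj_one_of_adj_zero (hbull : IsEmpty (bullGraph ↪g G))
    (w : (pathGraph 5)ᶜ ↪g G) {x y : V} (hyx : G.Adj y x) (hy : ∀ k, ¬G.Adj y (w k))
    (hx : G.Adj x (w 0)) : G.Adj x (w 1) := by
  have hw {a b : Fin 5} (h : (pathGraph 5)ᶜ.Adj a b := by simp [pathGraph_adj]) :
      G.Adj (w a) (w b) := w.map_adj_iff.2 h
  have hw' {a b : Fin 5} (h : ¬(pathGraph 5)ᶜ.Adj a b := by simp [pathGraph_adj]) :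
      ¬G.Adj (w a) (w b) := fun h' => h (w.map_adj_iff.1 h')
  by_contra hx1
  by_cases hx3 : G.Adj x (w 3)
  · exact not_isEmpty_bullGraph_embedding hyx hx3 hw hx hw (hy _) (hy _) (hy _) hx1 hw' hbull
  by_cases hx2 : G.Adj x (w 2)
  · exact not_isEmpty_bullGraph_embedding hyx hx hw hx2 hw (hy _) (hy _) (hy _) hx3 hw' hbull
  by_cases hx4 : G.Adj x (w 4)
  · exact not_isEmpty_bullGraph_embedding hyx hx hw hx4 hw (hy _) (hy _) (hy _) hx3 hw' hbull
  exact not_isEmpty_bullGraph_embedding hw hw hx.symm hw hw hw' (hx1 ·.symm) hw' (hx4 ·.symm) hx2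
    hbull

theorem mem_or_exists_adj_of_notMem_antiNbhd {S : Set V} {t : V} (ht : t ∉ antiNbhd G S) :
    t ∈ S ∨ ∃ u ∈ S, G.Adj t u := by
  simpa [antiNbhd, or_iff_not_imp_left] using ht

def outerBoundary (G : SimpleGraph V) (B : Set V) : Set V :=
  {x | x ∉ B ∧ ∃ y ∈ B, G.Adj y x}

def completeToBoundary (G : SimpleGraph V) (B : Set V) : Set V :=
  {u | u ∉ B ∧ ∀ x ∈ outerBoundary G B, G.Adj x u}

theorem isModule_completeToBoundary (B : Set V)
    (hclosed : ∀ ⦃t t'⦄, t' ∈ completeToBoundary G B → t ∉ B → t ≠ t' → ¬G.Adj t t' →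
      t ∈ completeToBoundary G B) :
    IsModule G (completeToBoundary G B) := by
  intro z hz
  by_cases hzB : z ∈ B
  · exact Or.inr fun u hu hzu => G.irrefl (hu.2 u ⟨hu.1, z, hzB, hzu⟩)
  · exact Or.inl fun u hu => by_contra fun h => hz (hclosed hu hzB (fun e => hz (e ▸ hu)) h)

section cycle

variable {n : ℕ} [NeZero n] (c : (cycleGraph n)ᶜ ↪g G)

theorem exists_compl_pathGraph_embedding_of_adj_of_not_adj (hn : 6 ≤ n) {u : V} {i j : Fin n}
    (hi : G.Adj u (c i)) (hj : ¬G.Adj u (c j)) :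
    ∃ w : (pathGraph 5)ᶜ ↪g (cycleGraph n)ᶜ, G.Adj u (c (w 0)) ∧ ¬G.Adj u (c (w 1)) := by
  obtain ⟨k, hk, hk1⟩ := Fin.exists_and_not_add_one_s9 (P := fun m => G.Adj u (c m)) hi hj
  obtain ⟨w, hw0, hw1⟩ := exists_compl_pathGraph_embedding_compl_cycleGraph hn k
  exact ⟨w, hw0 ▸ hk, hw1 ▸ hk1⟩

theorem exists_adj_of_adj_of_not_adj (hn : 6 ≤ n) {u : V} {i j : Fin n} (hi : G.Adj u (c i))
    (hj : ¬G.Adj u (c j)) :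
    ∃ a b, G.Adj (c a) (c b) ∧ G.Adj u (c a) ∧ ¬G.Adj u (c b) := by
  obtain ⟨w, hw0, hw1⟩ := exists_compl_pathGraph_embedding_of_adj_of_not_adj c hn hi hj
  have hcw {a b : Fin 5} (h : (pathGraph 5)ᶜ.Adj a b := by simp [pathGraph_adj]) :
      G.Adj (c (w a)) (c (w b)) := (c.comp w).map_adj_iff.2 h
  by_cases hw3 : G.Adj u (c (w 3))
  · exact ⟨w 3, w 1, hcw, hw3, hw1⟩
  · exact ⟨w 0, w 3, hcw, hw0, hw3⟩

theorem adj_of_adj_of_anticomplete (hbull : IsEmpty (bullGraph ↪g G)) (hn : 6 ≤ n)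
    {x y : V} (hy : ∀ m, ¬G.Adj y (c m)) (hyx : G.Adj y x) {i : Fin n} (hi : G.Adj x (c i))
    (j : Fin n) : G.Adj x (c j) := by
  by_contra hj
  obtain ⟨w, hw0, hw1⟩ := exists_compl_pathGraph_embedding_of_adj_of_not_adj c hn hi hj
  exact hw1 (compl_pathGraph_adj_one_of_adj_zero hbull (c.comp w) hyx (fun k => hy (w k)) hw0)

theorem adj_of_mem_outerBoundary (hbull : IsEmpty (bullGraph ↪g G)) (hn : 6 ≤ n)
    {x : V} (hx : x ∈ outerBoundary G (antiNbhd G (Set.range c))) (j : Fin n) :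
    G.Adj x (c j) := by
  obtain ⟨hxB, y, ⟨-, hy⟩, hyx⟩ := hx
  rcases mem_or_exists_adj_of_notMem_antiNbhd hxB with ⟨i, rfl⟩ | ⟨_, ⟨i, rfl⟩, hi⟩
  · exact absurd hyx (hy _ ⟨i, rfl⟩)
  · exact adj_of_adj_of_anticomplete c hbull hn (fun m => hy _ ⟨m, rfl⟩) hyx hi j

theorem range_subset_completeToBoundary (hbull : IsEmpty (bullGraph ↪g G)) (hn : 6 ≤ n) :
    Set.range c ⊆ completeToBoundary G (antiNbhd G (Set.range c)) := by
  rintro _ ⟨i, rfl⟩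
  exact ⟨fun h => h.1 ⟨i, rfl⟩, fun x hx => adj_of_mem_outerBoundary c hbull hn hx i⟩

theorem mem_completeToBoundary_of_not_adj (hbull : IsEmpty (bullGraph ↪g G)) (hn : 6 ≤ n)
    {t t' : V} (ht' : t' ∈ completeToBoundary G (antiNbhd G (Set.range c)))
    (ht : t ∉ antiNbhd G (Set.range c)) (htt' : ¬G.Adj t t') :
    t ∈ completeToBoundary G (antiNbhd G (Set.range c)) := by
  refine ⟨ht, fun x hx => by_contra fun hxt => ?_⟩
  have hxc := adj_of_mem_outerBoundary c hbull hn hx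
  have hxt' := ht'.2 x hx
  obtain ⟨-, y, hyB, hyx⟩ := hx
  have hyc : ∀ m, ¬G.Adj y (c m) := fun m => hyB.2 _ ⟨m, rfl⟩
  have hyt : ¬G.Adj y t := fun h => htt' (ht'.2 t ⟨ht, y, hyB, h⟩)
  have hyt' : ¬G.Adj y t' := fun h => G.irrefl (ht'.2 t' ⟨ht'.1, y, hyB, h⟩)
  obtain ⟨i, hi⟩ : ∃ i, G.Adj t (c i) := by
    rcases mem_or_exists_adj_of_notMem_antiNbhd ht with ⟨i, rfl⟩ | ⟨_, ⟨i, rfl⟩, hi⟩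
    exacts [absurd (hxc i) hxt, ⟨i, hi⟩]
  by_cases htc : ∀ m, G.Adj t (c m)
  · obtain ⟨m, hm⟩ : ∃ m, G.Adj t' (c m) := by
      rcases mem_or_exists_adj_of_notMem_antiNbhd ht'.1 with ⟨m, rfl⟩ | ⟨_, ⟨m, rfl⟩, hm⟩
      exacts [absurd (htc m) htt', ⟨m, hm⟩]
    exact not_isEmpty_bullGraph_embedding hyx (hxc m) (htc m).symm hxt' hm.symm (hyc m) hyt hyt'
      hxt htt' hbull
  · obtain ⟨j, hj⟩ := not_forall.mp htc
    obtain ⟨a, b, hab, ha, hb⟩ := exists_adj_of_adj_of_not_adj c hn hi hj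
    exact not_isEmpty_bullGraph_embedding hyx (hxc a) ha.symm (hxc b) hab (hyc a) hyt (hyc b) hxt
      hb hbull

theorem not_isPrime_of_mem_antiNbhd (hbull : IsEmpty (bullGraph ↪g G)) (hn : 6 ≤ n)
    {v : V} (hv : v ∈ antiNbhd G (Set.range c)) : ¬IsPrime G := by
  intro hprime
  have hc := range_subset_completeToBoundary c hbull hn
  have h01 : c 0 ≠ c 1 := c.injective.ne (by simp [Fin.ext_iff]; omega)
  rcases hprime _ (isModule_completeToBoundary _ fun t t' ht' ht _ htt' =>
      mem_completeToBoundary_of_not_adj c hbull hn ht' ht htt') with hM | ⟨x, hM⟩ | hM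
  · exact (hM ▸ hc ⟨0, rfl⟩ :)
  · exact h01 ((hM ▸ hc ⟨0, rfl⟩ :).trans (hM ▸ hc ⟨1, rfl⟩ :).symm)
  · exact (hM ▸ Set.mem_univ v).1 hv

end cycle

end

theorem stmt9_general {V : Type*} (G : SimpleGraph V)
    (hprime : IsPrime G)
    (hbull : IsEmpty (bullGraph ↪g G))
    (v : V) (l : ℕ) (hl : 6 ≤ l) :
    IsEmpty ((cycleGraph l)ᶜ ↪g G.induce (vertexAnti G v)) := by
  have : NeZero l := ⟨by omega⟩
  refine ⟨fun f => not_isPrime_of_mem_antiNbhd ((Embedding.induce _).comp f) hbull hl (v := v) ?_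
    hprime⟩
  exact ⟨fun ⟨i, hi⟩ => (f i).2.1 hi, Set.forall_mem_range.2 fun i => (f i).2.2⟩

theorem stmt9 {V : Type*} [Fintype V] (G : SimpleGraph V)
    (hprime : IsPrime G)
    (hbull : IsEmpty (bullGraph ↪g G))
    (v : V) (l : ℕ) (hl : 6 ≤ l) :
    IsEmpty ((cycleGraph l)ᶜ ↪g G.induce (vertexAnti G v)) :=
  stmt9_general G hprime hbull v l hl
end

section
/- Every prime (P_5, bull)-free graph is nearly C_5-free and nearly house-free: for every vertex v, the subgraph induced on the anti-neighborhood A(v) contains no induced C_5 and no induced house (complement of P_5). -/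
open SimpleGraph

namespace Stmt14Aux

def adjOf (E : List (Fin 5 × Fin 5)) (i j : Fin 5) : Bool :=
  E.any fun e => (e.1 == i && e.2 == j) || (e.1 == j && e.2 == i)

def shapeB : Fin 5 → Fin 5 → Bool := adjOf [(0,1),(1,2),(2,3),(1,4),(2,4)]
def shapeP : Fin 5 → Fin 5 → Bool := adjOf [(0,1),(1,2),(2,3),(3,4)]
def shapeC : Fin 5 → Fin 5 → Bool := adjOf [(0,1),(1,2),(2,3),(3,4),(4,0)]
def shapeH : Fin 5 → Fin 5 → Bool := adjOf [(0,1),(1,2),(2,3),(3,0),(4,1),(4,2)]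

lemma bull_mat : ∀ i j : Fin 5, bullGraph.Adj i j ↔ shapeB i j = true := by
  intro i j
  simp only [bullGraph, fromEdgeSet_adj, Set.mem_insert_iff, Set.mem_singleton_iff, Sym2.eq_iff]
  revert i j; decide

lemma house_mat : ∀ i j : Fin 5, houseGraph.Adj i j ↔ shapeH i j = true := by
  intro i j
  simp only [houseGraph, fromEdgeSet_adj, Set.mem_insert_iff, Set.mem_singleton_iff, Sym2.eq_iff]
  revert i j; decide

lemma path_mat : ∀ i j : Fin 5, (pathGraph 5).Adj i j ↔ shapeP i j = true := by
  simp only [pathGraph_adj]; decide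

lemma cycle_mat : ∀ i j : Fin 5, (cycleGraph 5).Adj i j ↔ shapeC i j = true := by
  decide

/-- template graph on 7 vertices: 0-4 the shape, 5 = p with pattern f, 6 = a adjacent only to p -/
def tmpl (s : Fin 5 → Fin 5 → Bool) (f : Fin 5 → Bool) (i j : Fin 7) : Bool :=
  if hi : i.val < 5 then
    if hj : j.val < 5 then s ⟨i.val, hi⟩ ⟨j.val, hj⟩
    else if j.val = 5 then f ⟨i.val, hi⟩ else false
  else if i.val = 5 then
    if hj : j.val < 5 then f ⟨j.val, hj⟩ else if j.val = 6 then true else false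
  else
    if j.val = 5 then true else false

abbrev Wit := Bool × Fin 7 × Fin 7 × Fin 7 × Fin 7 × Fin 7

def witFun (t : Wit) : Fin 5 → Fin 7 := ![t.2.1, t.2.2.1, t.2.2.2.1, t.2.2.2.2.1, t.2.2.2.2.2]

def chk (s : Fin 5 → Fin 5 → Bool) (f : Fin 5 → Bool) (t : Wit) : Bool :=
  (List.finRange 5).all fun i =>
    ((List.finRange 5).all fun j =>
      (decide (i = j) || decide (witFun t i ≠ witFun t j)) &&
        ((if t.1 then shapeB else shapeP) i j == tmpl s f (witFun t i) (witFun t j)))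

lemma chk_spec (s : Fin 5 → Fin 5 → Bool) (f : Fin 5 → Bool) (t : Wit) (h : chk s f t = true) :
    (∀ i j : Fin 5, i ≠ j → witFun t i ≠ witFun t j) ∧
      ∀ i j : Fin 5, (if t.1 then shapeB else shapeP) i j = tmpl s f (witFun t i) (witFun t j) := by
  simp only [chk, List.all_eq_true, Bool.and_eq_true, Bool.or_eq_true, decide_eq_true_eq,
    beq_iff_eq] at h
  refine ⟨fun i j hne => ?_, fun i j => (h i (List.mem_finRange i) j (List.mem_finRange j)).2⟩
  rcases (h i (List.mem_finRange i) j (List.mem_finRange j)).1 with h1 | h2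
  · exact absurd h1 hne
  · exact h2

def witsC : List Wit :=
  [(false, 3, 2, 1, 0, 5), (false, 3, 4, 0, 1, 5), (false, 4, 0, 1, 2, 5),
   (false, 0, 1, 2, 3, 5), (false, 2, 1, 0, 4, 5), (true, 2, 1, 0, 4, 5),
   (false, 3, 4, 0, 5, 6), (false, 2, 1, 0, 5, 6), (true, 1, 0, 4, 3, 5),
   (true, 0, 1, 2, 3, 5), (false, 4, 0, 1, 5, 6), (false, 3, 2, 1, 5, 6),
   (true, 1, 2, 3, 4, 5), (false, 0, 1, 2, 5, 6), (true, 0, 4, 3, 2, 5),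
   (true, 4, 0, 5, 6, 1), (true, 2, 1, 5, 6, 0), (true, 1, 0, 5, 6, 4),
   (true, 0, 1, 5, 6, 2), (true, 0, 4, 5, 6, 3), (true, 3, 4, 5, 6, 0)]

def witsH : List Wit :=
  [(false, 2, 1, 0, 5, 6), (true, 3, 2, 1, 5, 4), (true, 0, 1, 2, 5, 4),
   (false, 4, 1, 0, 3, 5), (true, 0, 1, 4, 5, 2), (true, 2, 1, 5, 6, 0),
   (false, 4, 1, 0, 5, 6), (true, 1, 0, 5, 6, 3), (true, 3, 2, 4, 5, 1),
   (true, 0, 1, 5, 6, 2), (false, 4, 2, 3, 5, 6), (true, 0, 1, 5, 6, 4),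
   (true, 3, 2, 5, 6, 4), (true, 3, 0, 1, 4, 5), (true, 0, 3, 5, 6, 2),
   (true, 4, 1, 5, 6, 0), (true, 3, 0, 5, 6, 1)]

lemma keyC : ∀ f : Fin 5 → Bool, (∃ i, f i = true) → (∃ i, f i = false) →
    ∃ t ∈ witsC, chk shapeC f t = true := by decide

lemma keyH : ∀ f : Fin 5 → Bool, (∃ i, f i = true) → (∃ i, f i = false) →
    ∃ t ∈ witsH, chk shapeH f t = true := by decide

lemma flipC : ∀ f : Fin 5 → Bool, (∃ i, f i = true) → (∃ i, f i = false) →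
    ∃ i j, shapeC i j = true ∧ f i = true ∧ f j = false := by decide

lemma flipH : ∀ f : Fin 5 → Bool, (∃ i, f i = true) → (∃ i, f i = false) →
    ∃ i j, shapeH i j = true ∧ f i = true ∧ f j = false := by decide



variable {V : Type*} {G : SimpleGraph V}

def umap (v0 v1 v2 v3 v4 : V) (k : Fin 5) : V :=
  if k.val = 0 then v0 else if k.val = 1 then v1 else if k.val = 2 then v2
  else if k.val = 3 then v3 else v4

/-- bull with path v0-v1-v2-v3 and v4 adjacent to v1,v2. -/
lemma bull_of (hbull : IsEmpty (bullGraph ↪g G)) (v0 v1 v2 v3 v4 : V)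
    (e01 : G.Adj v0 v1) (e12 : G.Adj v1 v2) (e23 : G.Adj v2 v3) (e14 : G.Adj v1 v4)
    (e24 : G.Adj v2 v4)
    (n02 : ¬G.Adj v0 v2) (n03 : ¬G.Adj v0 v3) (n04 : ¬G.Adj v0 v4) (n13 : ¬G.Adj v1 v3)
    (n34 : ¬G.Adj v3 v4)
    (d02 : v0 ≠ v2) (d03 : v0 ≠ v3) (d04 : v0 ≠ v4) (d13 : v1 ≠ v3) (d34 : v3 ≠ v4) : False := by
  have uinj : Function.Injective (umap v0 v1 v2 v3 v4) := by
    intro x y h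
    fin_cases x <;> fin_cases y <;>
      first
        | rfl
        | exact absurd h e01.ne | exact absurd h e01.ne' | exact absurd h e12.ne
        | exact absurd h e12.ne' | exact absurd h e23.ne | exact absurd h e23.ne'
        | exact absurd h e14.ne | exact absurd h e14.ne' | exact absurd h e24.ne
        | exact absurd h e24.ne' | exact absurd h d02 | exact absurd h d02.symm
        | exact absurd h d03 | exact absurd h d03.symm | exact absurd h d04
        | exact absurd h d04.symm | exact absurd h d13 | exact absurd h d13.symm
        | exact absurd h d34 | exact absurd h d34.symm
  have hiff : ∀ i j : Fin 5, shapeB i j = true ↔ G.Adj (umap v0 v1 v2 v3 v4 i)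
      (umap v0 v1 v2 v3 v4 j) := by
    intro i j
    fin_cases i <;> fin_cases j <;>
      first
        | exact iff_of_true (by decide) e01 | exact iff_of_true (by decide) e01.symm
        | exact iff_of_true (by decide) e12 | exact iff_of_true (by decide) e12.symm
        | exact iff_of_true (by decide) e23 | exact iff_of_true (by decide) e23.symm
        | exact iff_of_true (by decide) e14 | exact iff_of_true (by decide) e14.symm
        | exact iff_of_true (by decide) e24 | exact iff_of_true (by decide) e24.symm
        | exact iff_of_false (by decide) n02 | exact iff_of_false (by decide) (fun h => n02 h.symm)
        | exact iff_of_false (by decide) n03 | exact iff_of_false (by decide) (fun h => n03 h.symm)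
        | exact iff_of_false (by decide) n04 | exact iff_of_false (by decide) (fun h => n04 h.symm)
        | exact iff_of_false (by decide) n13 | exact iff_of_false (by decide) (fun h => n13 h.symm)
        | exact iff_of_false (by decide) n34 | exact iff_of_false (by decide) (fun h => n34 h.symm)
        | exact iff_of_false (by decide) (G.irrefl)
  exact hbull.elim ⟨⟨_, uinj⟩, @fun i j => ((bull_mat i j).trans (hiff i j)).symm⟩

lemma absurd_of_chk (hP5 : IsEmpty (pathGraph 5 ↪g G)) (hbull : IsEmpty (bullGraph ↪g G))
    (s : Fin 5 → Fin 5 → Bool) (f : Fin 5 → Bool) (w : Fin 7 → V)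
    (hwinj : Function.Injective w)
    (hadj : ∀ i j, tmpl s f i j = true ↔ G.Adj (w i) (w j))
    (t : Wit) (ht : chk s f t = true) : False := by
  obtain ⟨hinj, hmat⟩ := chk_spec s f t ht
  have uinj : Function.Injective (fun i => w (witFun t i)) := by
    intro x y hxy
    by_contra hne
    exact hinj x y hne (hwinj hxy)
  obtain ⟨b, g0, g1, g2, g3, g4⟩ := t
  cases b with
  | false =>
    have key : ∀ i j : Fin 5, (pathGraph 5).Adj i j ↔
        G.Adj (w (witFun (false, g0, g1, g2, g3, g4) i)) (w (witFun (false, g0, g1, g2, g3, g4) j)) := by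
      intro i j
      have h1 : shapeP i j = tmpl s f (witFun (false, g0, g1, g2, g3, g4) i)
          (witFun (false, g0, g1, g2, g3, g4) j) := hmat i j
      rw [path_mat, h1]
      exact hadj _ _
    exact hP5.elim ⟨⟨_, uinj⟩, @fun i j => (key i j).symm⟩
  | true =>
    have key : ∀ i j : Fin 5, bullGraph.Adj i j ↔
        G.Adj (w (witFun (true, g0, g1, g2, g3, g4) i)) (w (witFun (true, g0, g1, g2, g3, g4) j)) := by
      intro i j
      have h1 : shapeB i j = tmpl s f (witFun (true, g0, g1, g2, g3, g4) i)
          (witFun (true, g0, g1, g2, g3, g4) j) := hmat i j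
      rw [bull_mat, h1]
      exact hadj _ _
    exact hbull.elim ⟨⟨_, uinj⟩, @fun i j => (key i j).symm⟩

def wmap (c : Fin 5 → V) (p a : V) (k : Fin 7) : V :=
  if h : k.val < 5 then c ⟨k.val, h⟩ else if k.val = 5 then p else a

/-- a vertex `p` with a neighbour and a non-neighbour in the shape, and a neighbour `a`
in the anti-neighbourhood of the shape, yields a contradiction. -/
lemma contact_full (hP5 : IsEmpty (pathGraph 5 ↪g G)) (hbull : IsEmpty (bullGraph ↪g G))
    (s : Fin 5 → Fin 5 → Bool) (wits : List Wit)
    (hkey : ∀ f : Fin 5 → Bool, (∃ i, f i = true) → (∃ i, f i = false) →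
      ∃ t ∈ wits, chk s f t = true)
    (c : Fin 5 → V) (hcinj : Function.Injective c)
    (hc : ∀ i j, s i j = true ↔ G.Adj (c i) (c j))
    (p a : V) (hpS : ∀ i, p ≠ c i) (haS : ∀ i, a ≠ c i)
    (hpn : ∃ i, G.Adj p (c i)) (hpnf : ∃ i, ¬ G.Adj p (c i))
    (han : ∀ i, ¬ G.Adj a (c i)) (hap : G.Adj a p) : False := by
  classical
  set f : Fin 5 → Bool := fun i => decide (G.Adj p (c i)) with hfdef
  have hf : ∀ i, f i = true ↔ G.Adj p (c i) := fun i => by simp [hfdef]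
  obtain ⟨t, _, htchk⟩ := hkey f
    (by obtain ⟨i, hi⟩ := hpn; exact ⟨i, (hf i).mpr hi⟩)
    (by obtain ⟨i, hi⟩ := hpnf; exact ⟨i, by simp [hfdef, hi]⟩)
  have hwinj : Function.Injective (wmap c p a) := by
    intro x y h
    have hx7 := x.isLt
    have hy7 := y.isLt
    unfold wmap at h
    split_ifs at h with h1 h2 h3 h4 h5 h6 h7 h8
    all_goals first
      | (apply Fin.ext; omega)
      | (apply Fin.ext
         have := congrArg Fin.val (hcinj h)
         simp only [] at this
         omega)
      | exact absurd h.symm (hpS _)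
      | exact absurd h (hpS _)
      | exact absurd h.symm (haS _)
      | exact absurd h (haS _)
      | exact absurd h.symm hap.ne
      | exact absurd h hap.ne
  have hadj : ∀ i j, tmpl s f i j = true ↔ G.Adj (wmap c p a i) (wmap c p a j) := by
    intro i j
    have hi7 := i.isLt
    have hj7 := j.isLt
    unfold tmpl wmap
    split_ifs
    all_goals first
      | exact hc _ _
      | exact (hf _).trans (G.adj_comm p (c _))
      | exact hf _
      | exact iff_of_true rfl hap
      | exact iff_of_true rfl hap.symm
      | exact iff_of_false Bool.false_ne_true (fun h => han _ h.symm)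
      | exact iff_of_false Bool.false_ne_true (han _)
      | exact iff_of_false Bool.false_ne_true (G.irrefl)
      | exact iff_of_false not_false (fun h => han _ h.symm)
      | exact iff_of_false not_false (han _)
      | exact iff_of_false not_false (G.irrefl)
      | (exfalso; omega)
  exact absurd_of_chk hP5 hbull s f (wmap c p a) hwinj hadj t htchk


/-- Main lemma: a prime (P5,bull)-free graph has no induced copy of the shape together with a
vertex having no neighbour on (and not belonging to) the shape. -/
lemma shape_dominating (hprime : IsPrime G)
    (hP5 : IsEmpty (pathGraph 5 ↪g G)) (hbull : IsEmpty (bullGraph ↪g G))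
    (s : Fin 5 → Fin 5 → Bool) (wits : List Wit)
    (hkey : ∀ f : Fin 5 → Bool, (∃ i, f i = true) → (∃ i, f i = false) →
      ∃ t ∈ wits, chk s f t = true)
    (hflip : ∀ f : Fin 5 → Bool, (∃ i, f i = true) → (∃ i, f i = false) →
      ∃ i j, s i j = true ∧ f i = true ∧ f j = false)
    (c : Fin 5 → V) (hcinj : Function.Injective c)
    (hc : ∀ i j, s i j = true ↔ G.Adj (c i) (c j))
    (v : V) (hvS : ∀ i, v ≠ c i) (hvn : ∀ i, ¬ G.Adj v (c i)) : False := by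
  classical
  set S : V → Prop := fun x => ∃ i, x = c i with hSdef
  set Fu : V → Prop := fun x => ∀ i, G.Adj x (c i) with hFdef
  set Pa : V → Prop := fun x => ¬ S x ∧ (∃ i, G.Adj x (c i)) ∧ (∃ i, ¬ G.Adj x (c i)) with hPdef
  set An : V → Prop := fun x => ¬ S x ∧ ∀ i, ¬ G.Adj x (c i) with hAdef
  have hpattern : ∀ p, (∃ i, G.Adj p (c i)) → (∃ i, ¬ G.Adj p (c i)) →
      ∃ i j, G.Adj p (c i) ∧ ¬ G.Adj p (c j) ∧ G.Adj (c i) (c j) := by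
    intro p h1 h2
    obtain ⟨i, j, hsij, hfi, hfj⟩ := hflip (fun i => decide (G.Adj p (c i)))
      (by obtain ⟨i, hi⟩ := h1; exact ⟨i, by simp [hi]⟩)
      (by obtain ⟨i, hi⟩ := h2; exact ⟨i, by simp [hi]⟩)
    exact ⟨i, j, by simpa using hfi, by simpa using hfj, (hc i j).mp hsij⟩
  have hM1 : ∀ p a, Pa p → An a → ¬ G.Adj a p := by
    intro p a hp ha hap
    exact contact_full hP5 hbull s wits hkey c hcinj hc p a
      (fun i he => hp.1 ⟨i, he⟩) (fun i he => ha.1 ⟨i, he⟩)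
      hp.2.1 hp.2.2 ha.2 hap
  have hM2 : ∀ t a p, Fu t → An a → G.Adj t a → Pa p → G.Adj t p := by
    intro t a p ht ha hta hp
    by_contra htp
    obtain ⟨i, j, hpi, hpj, hcij⟩ := hpattern p hp.2.1 hp.2.2
    exact bull_of hbull a t (c i) p (c j)
      hta.symm (ht i) hpi.symm (ht j) hcij
      (ha.2 i) (hM1 p a hp ha) (ha.2 j) htp hpj
      (fun he => ha.1 ⟨i, he⟩) (fun he => htp (by rw [← he]; exact hta))
      (fun he => ha.1 ⟨j, he⟩) (fun he => hpj (by rw [← he]; exact ht j))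
      (fun he => hp.1 ⟨j, he⟩)
  have hM3a : ∀ d t a p, Fu d → (∀ a', An a' → ¬ G.Adj d a') → Fu t → An a → G.Adj t a →
      ¬ G.Adj t d → Pa p → G.Adj d p := by
    intro d t a p hd hdA ht ha hta htd hp
    by_contra hdp
    obtain ⟨i, hpi⟩ := hp.2.1
    obtain ⟨j, hpj⟩ := hp.2.2
    exact bull_of hbull a t (c i) d p
      hta.symm (ht i) (hd i).symm (hM2 t a p ht ha hta hp) hpi.symm
      (ha.2 i) (fun h => hdA a ha h.symm) (hM1 p a hp ha) htd hdp
      (fun he => ha.1 ⟨i, he⟩) (fun he => ha.2 i (by rw [he]; exact hd i))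
      (fun he => ha.2 i (by rw [he]; exact hpi))
      (fun he => hdA a ha (by rw [← he]; exact hta))
      (fun he => hpj (by rw [← he]; exact hd j))
  have hM3b : ∀ d t a f, Fu d → (∀ a', An a' → ¬ G.Adj d a') → Fu t → An a → G.Adj t a →
      ¬ G.Adj t d → Fu f → (∀ a', An a' → ¬ G.Adj f a') → G.Adj f t → G.Adj d f := by
    intro d t a f hd hdA ht ha hta htd hf hfA hft
    by_contra hdf
    exact bull_of hbull d (c 0) t a f
      (hd 0) (ht 0).symm hta (hf 0).symm hft.symm
      (fun h => htd h.symm) (hdA a ha) hdf (fun h => ha.2 0 h.symm)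
      (fun h => hfA a ha h.symm)
      (fun he => hdA a ha (by rw [he]; exact hta))
      (fun he => ha.2 0 (by rw [← he]; exact hd 0))
      (fun he => htd (by rw [he]; exact hft.symm))
      (fun he => ha.1 ⟨0, he.symm⟩)
      (fun he => ha.2 0 (by rw [he]; exact hf 0))
  set U : Set V := {x | S x ∨ Pa x ∨ (Fu x ∧ (∀ a', An a' → ¬ G.Adj x a') ∧
      (∀ t, Fu t → (∃ a', An a' ∧ G.Adj t a') → G.Adj x t))} with hUdef
  have memU : ∀ x, x ∈ U ↔ (S x ∨ Pa x ∨ (Fu x ∧ (∀ a', An a' → ¬ G.Adj x a') ∧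
      (∀ t, Fu t → (∃ a', An a' ∧ G.Adj t a') → G.Adj x t))) := fun x => Iff.rfl
  have hmod : IsModule G U := by
    intro z hz
    rw [memU] at hz
    push_neg at hz
    obtain ⟨hzS, hzP, hzF1⟩ := hz
    by_cases hzn : ∃ i, G.Adj z (c i)
    · have hzf : Fu z := by
        by_contra hzf
        exact hzP ⟨hzS, hzn, not_forall.mp hzf⟩
      by_cases hA : ∃ a', An a' ∧ G.Adj z a'
      · left
        intro x hx
        rw [memU] at hx
        obtain ⟨a', ha', hza'⟩ := hA
        rcases hx with ⟨i, rfl⟩ | hxP | hxF1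
        · exact hzf i
        · exact hM2 z a' x hzf ha' hza' hxP
        · exact (hxF1.2.2 z hzf ⟨a', ha', hza'⟩).symm
      · push_neg at hA
        have hAn : ∀ a', An a' → ¬ G.Adj z a' := fun a' h1 => hA a' h1
        obtain ⟨t, htf, ⟨a', ha', hta'⟩, hzt⟩ := hzF1 hzf hAn
        left
        intro x hx
        rw [memU] at hx
        rcases hx with ⟨i, rfl⟩ | hxP | hxF1
        · exact hzf i
        · exact hM3a z t a' x hzf hAn htf ha' hta' (fun h => hzt h.symm) hxP
        · exact hM3b z t a' x hzf hAn htf ha' hta' (fun h => hzt h.symm)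
            hxF1.1 hxF1.2.1 (hxF1.2.2 t htf ⟨a', ha', hta'⟩)
    · push_neg at hzn
      have hzA : An z := ⟨hzS, hzn⟩
      right
      intro x hx
      rw [memU] at hx
      rcases hx with ⟨i, rfl⟩ | hxP | hxF1
      · exact hzn i
      · exact hM1 x z hxP hzA
      · exact fun h => hxF1.2.1 z hzA h.symm
  have hc0 : c 0 ∈ U := (memU (c 0)).mpr (Or.inl ⟨0, rfl⟩)
  have hc1 : c 1 ∈ U := (memU (c 1)).mpr (Or.inl ⟨1, rfl⟩)
  rcases hprime U hmod with h | ⟨x, hU1⟩ | h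
  · rw [h] at hc0; exact hc0
  · rw [hU1, Set.mem_singleton_iff] at hc0 hc1
    have : (0 : Fin 5) = 1 := hcinj (hc0.trans hc1.symm)
    exact absurd this (by decide)
  · have hv : v ∈ U := by rw [h]; trivial
    rw [memU] at hv
    rcases hv with ⟨i, he⟩ | hP | hF
    · exact hvS i he
    · obtain ⟨i, hi⟩ := hP.2.1
      exact hvn i hi
    · exact hvn 0 (hF.1 0)

end Stmt14Aux

theorem stmt14 {V : Type*} [Fintype V] (G : SimpleGraph V)
    (hprime : IsPrime G)
    (hP5 : IsEmpty (pathGraph 5 ↪g G))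
    (hbull : IsEmpty (bullGraph ↪g G))
    (v : V) :
    IsEmpty (cycleGraph 5 ↪g G.induce (vertexAnti G v)) ∧
      IsEmpty (houseGraph ↪g G.induce (vertexAnti G v)) := by
  constructor
  · refine ⟨fun e => ?_⟩
    refine Stmt14Aux.shape_dominating hprime hP5 hbull Stmt14Aux.shapeC Stmt14Aux.witsC
      Stmt14Aux.keyC Stmt14Aux.flipC (fun i => (e i).1)
      (fun i j h => e.injective (Subtype.coe_injective h))
      (fun i j => (Stmt14Aux.cycle_mat i j).symm.trans (e.map_adj_iff).symm)
      v (fun i => ((e i).2.1).symm) (fun i => (e i).2.2)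
  · refine ⟨fun e => ?_⟩
    refine Stmt14Aux.shape_dominating hprime hP5 hbull Stmt14Aux.shapeH Stmt14Aux.witsH
      Stmt14Aux.keyH Stmt14Aux.flipH (fun i => (e i).1)
      (fun i j h => e.injective (Subtype.coe_injective h))
      (fun i j => (Stmt14Aux.house_mat i j).symm.trans (e.map_adj_iff).symm)
      v (fun i => ((e i).2.1).symm) (fun i => (e i).2.2)
end

section
/- Let G be a (hole, dart)-free graph containing an induced \overline{C_6} A on vertices v_1,...,v_6 with triangles {v_1,v_2,v_3} and {v_4,v_5,v_6} and matching edges v_1v_4, v_2v_5, v_3v_6. If a vertex x outside A has exactly two neighbors in A, then those two neighbors are the endpoints of one of the matching edges v_1v_4, v_2v_5, v_3v_6. -/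
open SimpleGraph

/-- Complement of `C₆`: triangles {0,1,2} and {3,4,5} joined by matching 0-3, 1-4, 2-5. -/
def coC6Graph : SimpleGraph (Fin 6) :=
  SimpleGraph.fromEdgeSet
    {s(0,1), s(0,2), s(1,2), s(3,4), s(3,5), s(4,5), s(0,3), s(1,4), s(2,5)}

set_option maxHeartbeats 1000000 in
lemma dart_false {V : Type*} {G : SimpleGraph V} (hdart : IsEmpty (dartGraph ↪g G))
    (a b c d e : V)
    (h1 : G.Adj a b) (h2 : G.Adj a c) (h3 : G.Adj a d) (h4 : G.Adj b d)
    (h5 : G.Adj c d) (h6 : G.Adj d e)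
    (n1 : ¬G.Adj b c) (n2 : ¬G.Adj a e) (n3 : ¬G.Adj b e) (n4 : ¬G.Adj c e)
    (e1 : b ≠ c) (e2 : a ≠ e) (e3 : b ≠ e) (e4 : c ≠ e) : False := by
  have h1' := h1.symm; have h2' := h2.symm; have h3' := h3.symm
  have h4' := h4.symm; have h5' := h5.symm; have h6' := h6.symm
  have n1' : ¬G.Adj c b := fun h => n1 h.symm
  have n2' : ¬G.Adj e a := fun h => n2 h.symm
  have n3' : ¬G.Adj e b := fun h => n3 h.symm
  have n4' : ¬G.Adj e c := fun h => n4 h.symm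
  have d1 := h1.ne; have d2 := h2.ne; have d3 := h3.ne; have d4 := h4.ne
  have d5 := h5.ne; have d6 := h6.ne
  have d1' := d1.symm; have d2' := d2.symm; have d3' := d3.symm
  have d4' := d4.symm; have d5' := d5.symm; have d6' := d6.symm
  have e1' := e1.symm; have e2' := e2.symm; have e3' := e3.symm; have e4' := e4.symm
  exact hdart.elim ⟨⟨![a,b,c,d,e], by
      intro p q hpq
      fin_cases p <;> fin_cases q <;> simp at hpq ⊢ <;>
        first | rfl | exact absurd hpq (by assumption)⟩, by
    intro p q
    fin_cases p <;> fin_cases q <;>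
      simp [dartGraph, SimpleGraph.fromEdgeSet_adj] <;>
      first | assumption | exact fun h => G.loopless _ h⟩

set_option maxHeartbeats 1000000 in
lemma c5_false {V : Type*} {G : SimpleGraph V} (hhole : IsEmpty (cycleGraph 5 ↪g G))
    (a b c d e : V)
    (h1 : G.Adj a b) (h2 : G.Adj b c) (h3 : G.Adj c d) (h4 : G.Adj d e) (h5 : G.Adj e a)
    (n1 : ¬G.Adj a c) (n2 : ¬G.Adj a d) (n3 : ¬G.Adj b d) (n4 : ¬G.Adj b e)
    (n5 : ¬G.Adj c e)
    (e1 : a ≠ c) (e2 : a ≠ d) (e3 : b ≠ d) (e4 : b ≠ e) (e5 : c ≠ e) : False := by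
  have h1' := h1.symm; have h2' := h2.symm; have h3' := h3.symm
  have h4' := h4.symm; have h5' := h5.symm
  have n1' : ¬G.Adj c a := fun h => n1 h.symm
  have n2' : ¬G.Adj d a := fun h => n2 h.symm
  have n3' : ¬G.Adj d b := fun h => n3 h.symm
  have n4' : ¬G.Adj e b := fun h => n4 h.symm
  have n5' : ¬G.Adj e c := fun h => n5 h.symm
  have d1 := h1.ne; have d2 := h2.ne; have d3 := h3.ne; have d4 := h4.ne; have d5 := h5.ne
  have d1' := d1.symm; have d2' := d2.symm; have d3' := d3.symm; have d4' := d4.symm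
  have d5' := d5.symm
  have e1' := e1.symm; have e2' := e2.symm; have e3' := e3.symm; have e4' := e4.symm
  have e5' := e5.symm
  exact hhole.elim ⟨⟨![a,b,c,d,e], by
      intro p q hpq
      fin_cases p <;> fin_cases q <;> simp at hpq ⊢ <;>
        first | rfl | exact absurd hpq (by assumption)⟩, by
    intro p q
    fin_cases p <;> fin_cases q <;>
      simp (config := { decide := true }) [SimpleGraph.cycleGraph_adj'] <;>
      first | assumption | exact fun h => G.loopless _ h⟩

set_option maxHeartbeats 1600000 in
theorem stmt15 {V : Type*} [Fintype V] (G : SimpleGraph V)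
    (hhole : ∀ k : ℕ, 5 ≤ k → IsEmpty (cycleGraph k ↪g G))
    (hdart : IsEmpty (dartGraph ↪g G))
    (f : coC6Graph ↪g G)
    (x : V) (hx : x ∉ Set.range f)
    (h2 : {i : Fin 6 | G.Adj x (f i)}.ncard = 2) :
    {i : Fin 6 | G.Adj x (f i)} = ({0, 3} : Set (Fin 6)) ∨
      {i : Fin 6 | G.Adj x (f i)} = ({1, 4} : Set (Fin 6)) ∨
      {i : Fin 6 | G.Adj x (f i)} = ({2, 5} : Set (Fin 6)) := by
  obtain ⟨i, j, hij, hS⟩ := Set.ncard_eq_two.mp h2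
  have hk : ∀ k : Fin 6, G.Adj x (f k) ↔ (k = i ∨ k = j) := fun k => by
    simpa using Set.ext_iff.mp hS k
  have hyes : ∀ k : Fin 6, (k = i ∨ k = j) → G.Adj x (f k) := fun k h => (hk k).mpr h
  have hno : ∀ k : Fin 6, ¬(k = i ∨ k = j) → ¬G.Adj x (f k) := fun k hn h => hn ((hk k).mp h)
  have xN : ∀ k : Fin 6, x ≠ f k := fun k h => hx ⟨k, h.symm⟩
  have fI : ∀ p q : Fin 6, p ≠ q → f p ≠ f q := fun p q h he => h (f.injective he)
  have fA : ∀ p q : Fin 6, coC6Graph.Adj p q → G.Adj (f p) (f q) := fun p q h =>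
    f.map_rel_iff.mpr h
  have fN : ∀ p q : Fin 6, ¬coC6Graph.Adj p q → ¬G.Adj (f p) (f q) := fun p q h hg =>
    h (f.map_rel_iff.mp hg)
  have g01 := fA 0 1 (by simp [coC6Graph, SimpleGraph.fromEdgeSet_adj])
  have g02 := fA 0 2 (by simp [coC6Graph, SimpleGraph.fromEdgeSet_adj])
  have g12 := fA 1 2 (by simp [coC6Graph, SimpleGraph.fromEdgeSet_adj])
  have g34 := fA 3 4 (by simp [coC6Graph, SimpleGraph.fromEdgeSet_adj])
  have g35 := fA 3 5 (by simp [coC6Graph, SimpleGraph.fromEdgeSet_adj])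
  have g45 := fA 4 5 (by simp [coC6Graph, SimpleGraph.fromEdgeSet_adj])
  have g03 := fA 0 3 (by simp [coC6Graph, SimpleGraph.fromEdgeSet_adj])
  have g14 := fA 1 4 (by simp [coC6Graph, SimpleGraph.fromEdgeSet_adj])
  have g25 := fA 2 5 (by simp [coC6Graph, SimpleGraph.fromEdgeSet_adj])
  have ng04 := fN 0 4 (by simp [coC6Graph, SimpleGraph.fromEdgeSet_adj])
  have ng05 := fN 0 5 (by simp [coC6Graph, SimpleGraph.fromEdgeSet_adj])
  have ng13 := fN 1 3 (by simp [coC6Graph, SimpleGraph.fromEdgeSet_adj])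
  have ng15 := fN 1 5 (by simp [coC6Graph, SimpleGraph.fromEdgeSet_adj])
  have ng23 := fN 2 3 (by simp [coC6Graph, SimpleGraph.fromEdgeSet_adj])
  have ng24 := fN 2 4 (by simp [coC6Graph, SimpleGraph.fromEdgeSet_adj])
  fin_cases i <;> fin_cases j
  · exact absurd rfl hij
  · exact (dart_false hdart (f 0) (f 2) x (f 1) (f 4)
      g02 ((hyes 0 (Or.inl rfl))).symm g01 g12.symm (hyes 1 (Or.inr rfl)) g14
      (fun h => hno 2 (by decide) h.symm) ng04 ng24 (hno 4 (by decide))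
      (xN 2).symm (fI 0 4 (by decide)) (fI 2 4 (by decide)) (xN 4)).elim
  · exact (dart_false hdart (f 0) (f 1) x (f 2) (f 5)
      g01 ((hyes 0 (Or.inl rfl))).symm g02 g12 (hyes 2 (Or.inr rfl)) g25
      (fun h => hno 1 (by decide) h.symm) ng05 ng15 (hno 5 (by decide))
      (xN 1).symm (fI 0 5 (by decide)) (fI 1 5 (by decide)) (xN 5)).elim
  · exact Or.inl hS
  · exact (c5_false (hhole 5 (by norm_num)) x (f 0) (f 2) (f 5) (f 4)
      (hyes 0 (Or.inl rfl)) g02 g25 g45.symm ((hyes 4 (Or.inr rfl))).symm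
      (hno 2 (by decide)) (hno 5 (by decide)) ng05 ng04 ng24
      (xN 2) (xN 5) (fI 0 5 (by decide)) (fI 0 4 (by decide)) (fI 2 4 (by decide))).elim
  · exact (c5_false (hhole 5 (by norm_num)) x (f 0) (f 1) (f 4) (f 5)
      (hyes 0 (Or.inl rfl)) g01 g14 g45 ((hyes 5 (Or.inr rfl))).symm
      (hno 1 (by decide)) (hno 4 (by decide)) ng04 ng05 ng15
      (xN 1) (xN 4) (fI 0 4 (by decide)) (fI 0 5 (by decide)) (fI 1 5 (by decide))).elim
  · exact (dart_false hdart (f 1) (f 2) x (f 0) (f 3)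
      g12 ((hyes 1 (Or.inl rfl))).symm g01.symm g02.symm (hyes 0 (Or.inr rfl)) g03
      (fun h => hno 2 (by decide) h.symm) ng13 ng23 (hno 3 (by decide))
      (xN 2).symm (fI 1 3 (by decide)) (fI 2 3 (by decide)) (xN 3)).elim
  · exact absurd rfl hij
  · exact (dart_false hdart (f 1) (f 0) x (f 2) (f 5)
      g01.symm ((hyes 1 (Or.inl rfl))).symm g12 g02 (hyes 2 (Or.inr rfl)) g25
      (fun h => hno 0 (by decide) h.symm) ng15 ng05 (hno 5 (by decide))
      (xN 0).symm (fI 1 5 (by decide)) (fI 0 5 (by decide)) (xN 5)).elim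
  · exact (c5_false (hhole 5 (by norm_num)) x (f 1) (f 2) (f 5) (f 3)
      (hyes 1 (Or.inl rfl)) g12 g25 g35.symm ((hyes 3 (Or.inr rfl))).symm
      (hno 2 (by decide)) (hno 5 (by decide)) ng15 ng13 ng23
      (xN 2) (xN 5) (fI 1 5 (by decide)) (fI 1 3 (by decide)) (fI 2 3 (by decide))).elim
  · exact Or.inr (Or.inl hS)
  · exact (c5_false (hhole 5 (by norm_num)) x (f 1) (f 0) (f 3) (f 5)
      (hyes 1 (Or.inl rfl)) g01.symm g03 g35 ((hyes 5 (Or.inr rfl))).symm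
      (hno 0 (by decide)) (hno 3 (by decide)) ng13 ng15 ng05
      (xN 0) (xN 3) (fI 1 3 (by decide)) (fI 1 5 (by decide)) (fI 0 5 (by decide))).elim
  · exact (dart_false hdart (f 2) (f 1) x (f 0) (f 3)
      g12.symm ((hyes 2 (Or.inl rfl))).symm g02.symm g01.symm (hyes 0 (Or.inr rfl)) g03
      (fun h => hno 1 (by decide) h.symm) ng23 ng13 (hno 3 (by decide))
      (xN 1).symm (fI 2 3 (by decide)) (fI 1 3 (by decide)) (xN 3)).elim
  · exact (dart_false hdart (f 2) (f 0) x (f 1) (f 4)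
      g02.symm ((hyes 2 (Or.inl rfl))).symm g12.symm g01 (hyes 1 (Or.inr rfl)) g14
      (fun h => hno 0 (by decide) h.symm) ng24 ng04 (hno 4 (by decide))
      (xN 0).symm (fI 2 4 (by decide)) (fI 0 4 (by decide)) (xN 4)).elim
  · exact absurd rfl hij
  · exact (c5_false (hhole 5 (by norm_num)) x (f 2) (f 1) (f 4) (f 3)
      (hyes 2 (Or.inl rfl)) g12.symm g14 g34.symm ((hyes 3 (Or.inr rfl))).symm
      (hno 1 (by decide)) (hno 4 (by decide)) ng24 ng23 ng13
      (xN 1) (xN 4) (fI 2 4 (by decide)) (fI 2 3 (by decide)) (fI 1 3 (by decide))).elim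
  · exact (c5_false (hhole 5 (by norm_num)) x (f 2) (f 0) (f 3) (f 4)
      (hyes 2 (Or.inl rfl)) g02.symm g03 g34 ((hyes 4 (Or.inr rfl))).symm
      (hno 0 (by decide)) (hno 3 (by decide)) ng23 ng24 ng04
      (xN 0) (xN 3) (fI 2 3 (by decide)) (fI 2 4 (by decide)) (fI 0 4 (by decide))).elim
  · exact Or.inr (Or.inr hS)
  · exact Or.inl (hS.trans (Set.pair_comm _ _))
  · exact (c5_false (hhole 5 (by norm_num)) x (f 1) (f 2) (f 5) (f 3)
      (hyes 1 (Or.inr rfl)) g12 g25 g35.symm ((hyes 3 (Or.inl rfl))).symm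
      (hno 2 (by decide)) (hno 5 (by decide)) ng15 ng13 ng23
      (xN 2) (xN 5) (fI 1 5 (by decide)) (fI 1 3 (by decide)) (fI 2 3 (by decide))).elim
  · exact (c5_false (hhole 5 (by norm_num)) x (f 2) (f 1) (f 4) (f 3)
      (hyes 2 (Or.inr rfl)) g12.symm g14 g34.symm ((hyes 3 (Or.inl rfl))).symm
      (hno 1 (by decide)) (hno 4 (by decide)) ng24 ng23 ng13
      (xN 1) (xN 4) (fI 2 4 (by decide)) (fI 2 3 (by decide)) (fI 1 3 (by decide))).elim
  · exact absurd rfl hij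
  · exact (dart_false hdart (f 3) (f 5) x (f 4) (f 1)
      g35 ((hyes 3 (Or.inl rfl))).symm g34 g45.symm (hyes 4 (Or.inr rfl)) g14.symm
      (fun h => hno 5 (by decide) h.symm) (fun h => ng13 h.symm) (fun h => ng15 h.symm) (hno 1 (by decide))
      (xN 5).symm (fI 3 1 (by decide)) (fI 5 1 (by decide)) (xN 1)).elim
  · exact (dart_false hdart (f 3) (f 4) x (f 5) (f 2)
      g34 ((hyes 3 (Or.inl rfl))).symm g35 g45 (hyes 5 (Or.inr rfl)) g25.symm
      (fun h => hno 4 (by decide) h.symm) (fun h => ng23 h.symm) (fun h => ng24 h.symm) (hno 2 (by decide))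
      (xN 4).symm (fI 3 2 (by decide)) (fI 4 2 (by decide)) (xN 2)).elim
  · exact (c5_false (hhole 5 (by norm_num)) x (f 0) (f 2) (f 5) (f 4)
      (hyes 0 (Or.inr rfl)) g02 g25 g45.symm ((hyes 4 (Or.inl rfl))).symm
      (hno 2 (by decide)) (hno 5 (by decide)) ng05 ng04 ng24
      (xN 2) (xN 5) (fI 0 5 (by decide)) (fI 0 4 (by decide)) (fI 2 4 (by decide))).elim
  · exact Or.inr (Or.inl (hS.trans (Set.pair_comm _ _)))
  · exact (c5_false (hhole 5 (by norm_num)) x (f 2) (f 0) (f 3) (f 4)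
      (hyes 2 (Or.inr rfl)) g02.symm g03 g34 ((hyes 4 (Or.inl rfl))).symm
      (hno 0 (by decide)) (hno 3 (by decide)) ng23 ng24 ng04
      (xN 0) (xN 3) (fI 2 3 (by decide)) (fI 2 4 (by decide)) (fI 0 4 (by decide))).elim
  · exact (dart_false hdart (f 4) (f 5) x (f 3) (f 0)
      g45 ((hyes 4 (Or.inl rfl))).symm g34.symm g35.symm (hyes 3 (Or.inr rfl)) g03.symm
      (fun h => hno 5 (by decide) h.symm) (fun h => ng04 h.symm) (fun h => ng05 h.symm) (hno 0 (by decide))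
      (xN 5).symm (fI 4 0 (by decide)) (fI 5 0 (by decide)) (xN 0)).elim
  · exact absurd rfl hij
  · exact (dart_false hdart (f 4) (f 3) x (f 5) (f 2)
      g34.symm ((hyes 4 (Or.inl rfl))).symm g45 g35 (hyes 5 (Or.inr rfl)) g25.symm
      (fun h => hno 3 (by decide) h.symm) (fun h => ng24 h.symm) (fun h => ng23 h.symm) (hno 2 (by decide))
      (xN 3).symm (fI 4 2 (by decide)) (fI 3 2 (by decide)) (xN 2)).elim
  · exact (c5_false (hhole 5 (by norm_num)) x (f 0) (f 1) (f 4) (f 5)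
      (hyes 0 (Or.inr rfl)) g01 g14 g45 ((hyes 5 (Or.inl rfl))).symm
      (hno 1 (by decide)) (hno 4 (by decide)) ng04 ng05 ng15
      (xN 1) (xN 4) (fI 0 4 (by decide)) (fI 0 5 (by decide)) (fI 1 5 (by decide))).elim
  · exact (c5_false (hhole 5 (by norm_num)) x (f 1) (f 0) (f 3) (f 5)
      (hyes 1 (Or.inr rfl)) g01.symm g03 g35 ((hyes 5 (Or.inl rfl))).symm
      (hno 0 (by decide)) (hno 3 (by decide)) ng13 ng15 ng05
      (xN 0) (xN 3) (fI 1 3 (by decide)) (fI 1 5 (by decide)) (fI 0 5 (by decide))).elim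
  · exact Or.inr (Or.inr (hS.trans (Set.pair_comm _ _)))
  · exact (dart_false hdart (f 5) (f 4) x (f 3) (f 0)
      g45.symm ((hyes 5 (Or.inl rfl))).symm g35.symm g34.symm (hyes 3 (Or.inr rfl)) g03.symm
      (fun h => hno 4 (by decide) h.symm) (fun h => ng05 h.symm) (fun h => ng04 h.symm) (hno 0 (by decide))
      (xN 4).symm (fI 5 0 (by decide)) (fI 4 0 (by decide)) (xN 0)).elim
  · exact (dart_false hdart (f 5) (f 3) x (f 4) (f 1)
      g35.symm ((hyes 5 (Or.inl rfl))).symm g45.symm g34 (hyes 4 (Or.inr rfl)) g14.symm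
      (fun h => hno 3 (by decide) h.symm) (fun h => ng15 h.symm) (fun h => ng13 h.symm) (hno 1 (by decide))
      (xN 3).symm (fI 5 1 (by decide)) (fI 3 1 (by decide)) (xN 1)).elim
  · exact absurd rfl hij
end

section
/- Let G be a connected bull-free graph and H an induced subgraph of G such that every contact vertex of H is adjacent to all of H (i.e., every vertex adjacent to some vertex of H and to some vertex of A(H) dominates H). Let z be a vertex outside H adjacent to x and nonadjacent to y for some edge xy of H, and let H' be the subgraph induced by V(H) ∪ {z}. If A(H') is nonempty and some vertex v ∈ A(H') is at distance 2 from H' and at distance 2 from H, then every common neighbor u of v and a vertex of H is adjacent to every vertex of H' (including z). -/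
open SimpleGraph

theorem stmt17 {V : Type*} [Fintype V] (G : SimpleGraph V)
    (hconn : G.Connected)
    (hbull : IsEmpty (bullGraph ↪g G))
    (S : Set V)
    (hcontact : ∀ u ∈ contactSet G S, ∀ s ∈ S, G.Adj u s)
    (z : V) (hz : z ∉ S)
    (x y : V) (hxS : x ∈ S) (hyS : y ∈ S) (hxy : G.Adj x y)
    (hzx : G.Adj z x) (hzy : ¬ G.Adj z y)
    (hA : (antiNbhd G (S ∪ {z})).Nonempty)
    (v : V) (hv : v ∈ antiNbhd G (S ∪ {z}))
    (hd1 : setDist G v (S ∪ {z}) = 2) (hd2 : setDist G v S = 2)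
    (u : V) (huv : G.Adj u v) (huS : ∃ s ∈ S, G.Adj u s) :
    ∀ t ∈ S ∪ {z}, G.Adj u t := by
  obtain ⟨hvnot, hvnon⟩ := hv
  have hvz : ¬ G.Adj v z := hvnon z (Or.inr rfl)
  have hvS' : ∀ s ∈ S, ¬ G.Adj v s := fun s hs => hvnon s (Or.inl hs)
  obtain ⟨s0, hs0, hus0⟩ := huS
  have hvnS : v ∉ S := fun h => hvnot (Or.inl h)
  have huNotS : u ∉ S := fun h => hvS' u h huv.symm
  have huAll : ∀ s ∈ S, G.Adj u s :=
    hcontact u ⟨huNotS, ⟨s0, hs0, hus0⟩, ⟨v, ⟨hvnS, hvS'⟩, huv⟩⟩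
  have hux : G.Adj u x := huAll x hxS
  have huy : G.Adj u y := huAll y hyS
  by_cases huz : G.Adj u z
  · rintro t (ht | rfl)
    · exact huAll t ht
    · exact huz
  · exfalso
    -- adjacency facts, both directions
    have hxz : G.Adj x z := hzx.symm
    have hxu : G.Adj x u := hux.symm
    have hvu : G.Adj v u := huv.symm
    have hyx : G.Adj y x := hxy.symm
    have hyu : G.Adj y u := huy.symm
    -- non-adjacency facts, both directions
    have hzu : ¬ G.Adj z u := fun h => huz h.symm
    have hvx : ¬ G.Adj v x := hvS' x hxS
    have hvy : ¬ G.Adj v y := hvS' y hyS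
    have hxv : ¬ G.Adj x v := fun h => hvx h.symm
    have hyv : ¬ G.Adj y v := fun h => hvy h.symm
    have hzv : ¬ G.Adj z v := fun h => hvz h.symm
    have hyz : ¬ G.Adj y z := fun h => hzy h.symm
    -- distinctness
    have ne_zx : z ≠ x := hzx.ne
    have ne_zu : z ≠ u := by intro h; subst h; exact hvz huv.symm
    have ne_zv : z ≠ v := by intro h; subst h; exact hvx hzx
    have ne_zy : z ≠ y := by intro h; subst h; exact hz hyS
    have ne_xu : x ≠ u := by intro h; subst h; exact huNotS hxS
    have ne_xv : x ≠ v := by intro h; subst h; exact hvnS hxS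
    have ne_xy : x ≠ y := hxy.ne
    have ne_uv : u ≠ v := huv.ne
    have ne_uy : u ≠ y := by intro h; subst h; exact huNotS hyS
    have ne_vy : v ≠ y := by intro h; subst h; exact hvnS hyS
    refine hbull.false ⟨⟨![z, x, u, v, y], ?_⟩, ?_⟩
    · intro a b hab
      fin_cases a <;> fin_cases b <;> simp at hab ⊢ <;>
        first
          | rfl
          | exact absurd hab (by assumption)
          | exact absurd hab.symm (by assumption)
    · intro a b
      fin_cases a <;> fin_cases b <;>
        simp only [bullGraph, Matrix.cons_val_zero, Matrix.cons_val_one, Matrix.head_cons,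
          Matrix.cons_val_two, Matrix.tail_cons, Matrix.cons_val_three, Matrix.cons_val_four,
          Function.Embedding.coeFn_mk, fromEdgeSet_adj, Set.mem_insert_iff,
          Set.mem_singleton_iff] <;>
        simp <;>
        first
          | assumption
          | exact G.irrefl
end

section
/- If G is a prime (P_5, bull)-free graph, then no vertex v of G has an induced C_5 in its anti-neighborhood A(v). -/
open SimpleGraph

/- ### Auxiliary machinery -/

lemma bull_adj : ∀ i j : Fin 5, bullGraph.Adj i j ↔
    s(i,j) ∈ ({s(0,1), s(1,2), s(2,3), s(1,4), s(2,4)} : Finset (Sym2 (Fin 5))) := by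
  intro i j
  simp only [bullGraph, SimpleGraph.fromEdgeSet_adj, Set.mem_insert_iff, Set.mem_singleton_iff,
    Finset.mem_insert, Finset.mem_singleton]
  constructor
  · rintro ⟨h, -⟩; exact h
  · intro h
    refine ⟨h, ?_⟩
    rintro rfl
    revert h; fin_cases i <;> decide

lemma no_bull_aux {V : Type*} {G : SimpleGraph V} (hbull : IsEmpty (bullGraph ↪g G))
    (a b c d e : V)
    (hab : G.Adj a b) (hbc : G.Adj b c) (hcd : G.Adj c d) (hbe : G.Adj b e) (hce : G.Adj c e)
    (hac : ¬G.Adj a c) (had : ¬G.Adj a d) (hae : ¬G.Adj a e) (hbd : ¬G.Adj b d)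
    (hde : ¬G.Adj d e) : False := by
  have hba := hab.symm; have hcb := hbc.symm; have hdc := hcd.symm
  have heb := hbe.symm; have hec := hce.symm
  have hca : ¬G.Adj c a := fun h => hac h.symm
  have hda : ¬G.Adj d a := fun h => had h.symm
  have hea : ¬G.Adj e a := fun h => hae h.symm
  have hdb : ¬G.Adj d b := fun h => hbd h.symm
  have hed : ¬G.Adj e d := fun h => hde h.symm
  have nac : a ≠ c := fun h => hae (h ▸ hce)
  have nad : a ≠ d := fun h => hac (h ▸ hdc)
  have nae : a ≠ e := fun h => hac (h ▸ hec)
  have nbd : b ≠ d := fun h => hde (h ▸ hbe)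
  have nde : d ≠ e := fun h => hbd (h ▸ hbe)
  refine hbull.elim ⟨⟨![a,b,c,d,e], ?_⟩, ?_⟩
  · intro i j h
    fin_cases i <;> fin_cases j <;> simp_all
  · intro i j
    simp only [bull_adj]
    fin_cases i <;> fin_cases j <;> simp only [Matrix.cons_val_zero, Matrix.cons_val_one,
      Matrix.head_cons, Matrix.cons_val_succ] <;>
      first
      | exact iff_of_true (by assumption) (by decide)
      | exact iff_of_false (by first | assumption | exact G.irrefl) (by decide)

lemma no_p5_aux {V : Type*} {G : SimpleGraph V} (hP5 : IsEmpty (pathGraph 5 ↪g G))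
    (a b c d e : V)
    (hab : G.Adj a b) (hbc : G.Adj b c) (hcd : G.Adj c d) (hde : G.Adj d e)
    (hac : ¬G.Adj a c) (had : ¬G.Adj a d) (hae : ¬G.Adj a e) (hbd : ¬G.Adj b d)
    (hbe : ¬G.Adj b e) (hce : ¬G.Adj c e) : False := by
  have hba := hab.symm; have hcb := hbc.symm; have hdc := hcd.symm; have hed := hde.symm
  have hca : ¬G.Adj c a := fun h => hac h.symm
  have hda : ¬G.Adj d a := fun h => had h.symm
  have hea : ¬G.Adj e a := fun h => hae h.symm
  have hdb : ¬G.Adj d b := fun h => hbd h.symm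
  have heb : ¬G.Adj e b := fun h => hbe h.symm
  have hec : ¬G.Adj e c := fun h => hce h.symm
  have nac : a ≠ c := fun h => had (h ▸ hcd)
  have nad : a ≠ d := fun h => hae (h ▸ hde)
  have nae : a ≠ e := fun h => had (h ▸ hed)
  have nbd : b ≠ d := fun h => hbe (h ▸ hde)
  have nbe : b ≠ e := fun h => hae (h ▸ hab)
  have nce : c ≠ e := fun h => hbe (h ▸ hbc)
  refine hP5.elim ⟨⟨![a,b,c,d,e], ?_⟩, ?_⟩
  · intro i j h
    fin_cases i <;> fin_cases j <;> simp_all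
  · intro i j
    simp only [pathGraph_adj]
    fin_cases i <;> fin_cases j <;> simp only [Matrix.cons_val_zero, Matrix.cons_val_one,
      Matrix.head_cons, Matrix.cons_val_succ] <;>
      first
      | exact iff_of_true (by assumption) (by decide)
      | exact iff_of_false (by first | assumption | exact G.irrefl) (by decide)

/-- If `z` is adjacent to `v`, all of `w0,…,w4` (an induced `C₅` in cyclic order) are
nonadjacent to `v`, and `z` distinguishes the edge `w0w1`, we get a `P₅` or a bull. -/
lemma c5_edge {V : Type*} {G : SimpleGraph V}
    (hP5 : IsEmpty (pathGraph 5 ↪g G)) (hbull : IsEmpty (bullGraph ↪g G))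
    (v z w0 w1 w2 w3 w4 : V)
    (a01 : G.Adj w0 w1) (a12 : G.Adj w1 w2) (a23 : G.Adj w2 w3) (a34 : G.Adj w3 w4)
    (a40 : G.Adj w4 w0)
    (n02 : ¬G.Adj w0 w2) (n03 : ¬G.Adj w0 w3) (n13 : ¬G.Adj w1 w3) (n14 : ¬G.Adj w1 w4)
    (n24 : ¬G.Adj w2 w4)
    (hv0 : ¬G.Adj v w0) (hv1 : ¬G.Adj v w1) (hv2 : ¬G.Adj v w2) (hv3 : ¬G.Adj v w3)
    (hv4 : ¬G.Adj v w4)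
    (hvz : G.Adj v z) (hz0 : G.Adj z w0) (hz1 : ¬G.Adj z w1) : False := by
  by_cases h4 : G.Adj z w4
  · by_cases h3 : G.Adj z w3
    · by_cases h2 : G.Adj z w2
      · exact no_bull_aux hbull v z w2 w1 w3 hvz h2 a12.symm h3 a23 hv2 hv1 hv3 hz1 n13
      · exact no_bull_aux hbull v z w3 w2 w4 hvz h3 a23.symm h4 a34 hv3 hv2 hv4 h2 n24
    · exact no_bull_aux hbull w3 w4 w0 w1 z a34 a40 a01 h4.symm hz0.symm
        (fun h => n03 h.symm) (fun h => n13 h.symm) (fun h => h3 h.symm)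
        (fun h => n14 h.symm) (fun h => hz1 h.symm)
  · by_cases h2 : G.Adj z w2
    · by_cases h3 : G.Adj z w3
      · exact no_bull_aux hbull w1 w2 w3 w4 z a12 a23 a34 h2.symm h3.symm
          n13 n14 (fun h => hz1 h.symm) n24 (fun h => h4 h.symm)
      · exact no_p5_aux hP5 v z w2 w3 w4 hvz h2 a23 a34 hv2 hv3 hv4 h3 h4 n24
    · exact no_p5_aux hP5 v z w0 w1 w2 hvz hz0 a01 a12 hv0 hv1 hv2 hz1 h2 n02

/-- The closure of a set `C` under adding vertices that distinguish an edge. -/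
inductive InH {V : Type*} (G : SimpleGraph V) (C : Set V) : V → Prop
  | base {x : V} : x ∈ C → InH G C x
  | grow {a b x : V} : InH G C a → InH G C b → G.Adj a b → G.Adj x a → ¬ G.Adj x b → InH G C x

theorem stmt18 {V : Type*} [Fintype V] (G : SimpleGraph V)
    (hprime : IsPrime G)
    (hP5 : IsEmpty (pathGraph 5 ↪g G))
    (hbull : IsEmpty (bullGraph ↪g G))
    (v : V) :
    IsEmpty (cycleGraph 5 ↪g G.induce (vertexAnti G v)) := by
  constructor
  intro emb
  set c : Fin 5 → V := fun i => (emb i : V) with hc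
  have hadj : ∀ i j : Fin 5, G.Adj (c i) (c j) ↔ (cycleGraph 5).Adj i j := by
    intro i j
    rw [← SimpleGraph.Embedding.map_adj_iff emb]
    simp [comap_adj, hc]
  have hmem : ∀ i, (c i) ≠ v ∧ ¬ G.Adj v (c i) := fun i => (emb i).2
  have hv : ∀ i, ¬ G.Adj v (c i) := fun i => (hmem i).2
  have hvne : ∀ i, c i ≠ v := fun i => (hmem i).1
  have a01 : G.Adj (c 0) (c 1) := (hadj 0 1).2 (by decide)
  have a12 : G.Adj (c 1) (c 2) := (hadj 1 2).2 (by decide)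
  have a23 : G.Adj (c 2) (c 3) := (hadj 2 3).2 (by decide)
  have a34 : G.Adj (c 3) (c 4) := (hadj 3 4).2 (by decide)
  have a40 : G.Adj (c 4) (c 0) := (hadj 4 0).2 (by decide)
  have n02 : ¬G.Adj (c 0) (c 2) := fun h => by exact absurd ((hadj 0 2).1 h) (by decide)
  have n03 : ¬G.Adj (c 0) (c 3) := fun h => by exact absurd ((hadj 0 3).1 h) (by decide)
  have n13 : ¬G.Adj (c 1) (c 3) := fun h => by exact absurd ((hadj 1 3).1 h) (by decide)
  have n14 : ¬G.Adj (c 1) (c 4) := fun h => by exact absurd ((hadj 1 4).1 h) (by decide)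
  have n24 : ¬G.Adj (c 2) (c 4) := fun h => by exact absurd ((hadj 2 4).1 h) (by decide)
  have n02' : ¬G.Adj (c 2) (c 0) := fun h => n02 h.symm
  have n03' : ¬G.Adj (c 3) (c 0) := fun h => n03 h.symm
  have n13' : ¬G.Adj (c 3) (c 1) := fun h => n13 h.symm
  have n14' : ¬G.Adj (c 4) (c 1) := fun h => n14 h.symm
  have n24' : ¬G.Adj (c 4) (c 2) := fun h => n24 h.symm
  set C : Set V := Set.range c with hC
  set H : Set V := {x | InH G C x} with hH
  -- the key invariant
  have key : ∀ x, InH G C x →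
      x ≠ v ∧ ¬ G.Adj v x ∧ ∀ z, G.Adj v z → (G.Adj z x ↔ G.Adj z (c 0)) := by
    intro x hx
    induction hx with
    | base hxC =>
      obtain ⟨i, rfl⟩ := hxC
      refine ⟨hvne i, hv i, ?_⟩
      intro z hz
      have iff01 : G.Adj z (c 0) ↔ G.Adj z (c 1) := by
        constructor
        · intro h; by_contra h'
          exact c5_edge hP5 hbull v z (c 0) (c 1) (c 2) (c 3) (c 4) a01 a12 a23 a34 a40
            n02 n03 n13 n14 n24 (hv 0) (hv 1) (hv 2) (hv 3) (hv 4) hz h h'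
        · intro h; by_contra h'
          exact c5_edge hP5 hbull v z (c 1) (c 0) (c 4) (c 3) (c 2) a01.symm a40.symm a34.symm
            a23.symm a12.symm n14 n13 n03 n02 n24' (hv 1) (hv 0) (hv 4) (hv 3) (hv 2) hz h h'
      have iff12 : G.Adj z (c 1) ↔ G.Adj z (c 2) := by
        constructor
        · intro h; by_contra h'
          exact c5_edge hP5 hbull v z (c 1) (c 2) (c 3) (c 4) (c 0) a12 a23 a34 a40 a01
            n13 n14 n24 n02' n03' (hv 1) (hv 2) (hv 3) (hv 4) (hv 0) hz h h'
        · intro h; by_contra h'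
          exact c5_edge hP5 hbull v z (c 2) (c 1) (c 0) (c 4) (c 3) a12.symm a01.symm a40.symm
            a34.symm a23.symm n02' n24 n14 n13 n03 (hv 2) (hv 1) (hv 0) (hv 4) (hv 3) hz h h'
      have iff23 : G.Adj z (c 2) ↔ G.Adj z (c 3) := by
        constructor
        · intro h; by_contra h'
          exact c5_edge hP5 hbull v z (c 2) (c 3) (c 4) (c 0) (c 1) a23 a34 a40 a01 a12
            n24 n02' n03' n13' n14' (hv 2) (hv 3) (hv 4) (hv 0) (hv 1) hz h h'
        · intro h; by_contra h'
          exact c5_edge hP5 hbull v z (c 3) (c 2) (c 1) (c 0) (c 4) a23.symm a12.symm a01.symm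
            a40.symm a34.symm n13' n03' n02' n24 n14 (hv 3) (hv 2) (hv 1) (hv 0) (hv 4) hz h h'
      have iff34 : G.Adj z (c 3) ↔ G.Adj z (c 4) := by
        constructor
        · intro h; by_contra h'
          exact c5_edge hP5 hbull v z (c 3) (c 4) (c 0) (c 1) (c 2) a34 a40 a01 a12 a23
            n03' n13' n14' n24' n02 (hv 3) (hv 4) (hv 0) (hv 1) (hv 2) hz h h'
        · intro h; by_contra h'
          exact c5_edge hP5 hbull v z (c 4) (c 3) (c 2) (c 1) (c 0) a34.symm a23.symm a12.symm
            a01.symm a40.symm n24' n14' n13' n03' n02' (hv 4) (hv 3) (hv 2) (hv 1) (hv 0) hz h h'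
      fin_cases i
      · exact Iff.rfl
      · exact iff01.symm
      · exact iff12.symm.trans iff01.symm
      · exact iff23.symm.trans (iff12.symm.trans iff01.symm)
      · exact iff34.symm.trans (iff23.symm.trans (iff12.symm.trans iff01.symm))
    | @grow a b x ha hb hab2 hxa hxb iha ihb =>
      obtain ⟨hanv, hvaN, hza⟩ := iha
      obtain ⟨hbnv, hvbN, hzb⟩ := ihb
      have hxnv : x ≠ v := by rintro rfl; exact hvaN hxa
      have hvxN : ¬ G.Adj v x := by
        intro hvx
        exact hxb (((hza x hvx).trans (hzb x hvx).symm).1 hxa)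
      refine ⟨hxnv, hvxN, ?_⟩
      intro z hz
      constructor
      · intro hzx
        by_contra h0
        have hza' : ¬ G.Adj z a := fun h => h0 ((hza z hz).1 h)
        have hzb' : ¬ G.Adj z b := fun h => h0 ((hzb z hz).1 h)
        exact no_p5_aux hP5 v z x a b hz hzx hxa hab2 hvxN hvaN hvbN hza' hzb' hxb
      · intro h0
        by_contra hzx
        have hza' : G.Adj z a := (hza z hz).2 h0
        have hzb' : G.Adj z b := (hzb z hz).2 h0
        exact no_bull_aux hbull v z a x b hz hza' hxa.symm hzb' hab2
          hvaN hvxN hvbN hzx hxb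
  -- connectivity of H
  set R : V → V → Prop := fun p q => InH G C p ∧ InH G C q ∧ G.Adj p q with hR
  have B : ∀ i : Fin 5, InH G C (c i) := fun i => InH.base ⟨i, rfl⟩
  have conn : ∀ x, InH G C x → Relation.ReflTransGen R x (c 0) := by
    intro x hx
    induction hx with
    | base hxC =>
      obtain ⟨i, rfl⟩ := hxC
      fin_cases i
      · exact Relation.ReflTransGen.refl
      · exact Relation.ReflTransGen.single ⟨B 1, B 0, a01.symm⟩
      · exact Relation.ReflTransGen.head ⟨B 2, B 1, a12.symm⟩
          (Relation.ReflTransGen.single ⟨B 1, B 0, a01.symm⟩)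
      · exact Relation.ReflTransGen.head ⟨B 3, B 4, a34⟩
          (Relation.ReflTransGen.single ⟨B 4, B 0, a40⟩)
      · exact Relation.ReflTransGen.single ⟨B 4, B 0, a40⟩
    | grow ha hb hab2 hxa hxb iha ihb =>
      exact Relation.ReflTransGen.head ⟨InH.grow ha hb hab2 hxa hxb, ha, hxa⟩ iha
  have switch : ∀ z p q, Relation.ReflTransGen R p q → G.Adj z p → ¬G.Adj z q → InH G C z := by
    intro z p q hpq
    induction hpq using Relation.ReflTransGen.head_induction_on with
    | refl => intro h1 h2; exact absurd h1 h2
    | @head p' m hrel hchain ih =>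
      intro hzp hzq
      by_cases h : G.Adj z m
      · exact ih h hzq
      · exact InH.grow hrel.1 hrel.2.1 hrel.2.2 hzp h
  have hsymm : Symmetric R := fun p q h => ⟨h.2.1, h.1, h.2.2.symm⟩
  have hmod : IsModule G H := by
    intro z hz
    by_contra hcon
    push_neg at hcon
    obtain ⟨⟨y, hyH, hzy⟩, ⟨x, hxH, hzx⟩⟩ := hcon
    have chain : Relation.ReflTransGen R x y :=
      (conn x hxH).trans ((@Relation.ReflTransGen.stdSymm _ R ⟨hsymm⟩).symm _ _ (conn y hyH))
    exact hz (switch z x y chain hzx hzy)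
  rcases hprime H hmod with h | ⟨x, h⟩ | h
  · have : c 0 ∈ H := B 0
    rw [h] at this
    exact this
  · have h0 : c 0 ∈ H := B 0
    have h1 : c 1 ∈ H := B 1
    rw [h] at h0 h1
    exact a01.ne (h0.trans h1.symm)
  · have hvH : v ∈ H := h.symm ▸ Set.mem_univ v
    exact (key v hvH).1 rfl
end
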